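/- arXiv:2510.14651 — 6 statements merged into one kernel-verified Lean document; each statement's English description precedes it below -/
import Mathlib

section
/- Let n ≥ 3, let L_0,…,L_n ⊆ ℂ² be pairwise distinct lines, let c_0,…,c_n ∈ ℕ, and fix an index i_0 with c_{i_0} ≥ 1. Define an assignment (E^σ_m) of subspaces of ℂ² by: E^σ_m = ℂ² if ⟨m, u_ρ⟩ ≥ 0 for every ray ρ of σ; E^σ_m = L_i if the ray ρ_i belongs to σ(1), −c_i ≤ ⟨m, e_i⟩ < 0, and ⟨m, u_{ρ'}⟩ ≥ 0 for every other ray ρ' of σ; and E^σ_m = 0 otherwise. Then (E^σ_m) is a family of multifiltrations of ℂ², and for every tuple (p_3,…,p_n) ∈ ℕ^{n−2} there exist families of multifiltrations 𝓔_{k,j} of ℂ² (for 3 ≤ k ≤ n and 0 ≤ j ≤ p_k) with 𝓔_{3,0} = (E^σ_m) and 𝓔_{k,0} = 𝓔_{k−1,p_{k−1}} for k ≥ 4, together with, for each 1 ≤ j ≤ p_k, a saturated elementary injection 𝓔_{k,j} ⊆ 𝓔_{k,j−1} of dimension parameter k whose weight equals 𝐦_Σ^{k,j} = −c_{i_0}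 + Σ_{3 ≤ i < k} p_i + (j−1). -/
open Finset

namespace Toric

/-- Primitive ray generators of the fan of `ℙⁿ`: `u 0 = -(e₁+⋯+eₙ)` and `u (i+1) = e_{i+1}`. -/
def uGen (n : ℕ) : Fin (n + 1) → Fin n → ℤ :=
  Fin.cons (fun _ => -1) fun k => Pi.single k 1

/-- The duality pairing `⟨m, u_i⟩` for `m ∈ M = ℤⁿ`. -/
def pair (n : ℕ) (m : Fin n → ℤ) (i : Fin (n + 1)) : ℤ :=
  ∑ j, m j * uGen n i j

/-- A cone of the fan of `ℙⁿ`: a proper subset of the set `{0, …, n}` of rays. -/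
abbrev Cone (n : ℕ) : Type := {I : Finset (Fin (n + 1)) // I ≠ Finset.univ}

/-- `m ≤_σ m'`, i.e. `m' - m ∈ σ^∨`. -/
def dualLe (n : ℕ) (σ : Cone n) (m m' : Fin n → ℤ) : Prop :=
  ∀ i ∈ σ.1, 0 ≤ pair n (m' - m) i

/-- `m ∈ σ^⊥`. -/
def inPerp (n : ℕ) (σ : Cone n) (m : Fin n → ℤ) : Prop :=
  ∀ i ∈ σ.1, pair n m i = 0

/-- `m <_σ m'`, i.e. `m ≤_σ m'` and `m' - m ∉ σ^⊥`. -/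
def dualLt (n : ℕ) (σ : Cone n) (m m' : Fin n → ℤ) : Prop :=
  dualLe n σ m m' ∧ ¬ inPerp n σ (m' - m)

/-- A family of multifiltrations of the `ℂ`-vector space `V`, indexed by the cones of the fan
of `ℙⁿ` and the characters `m ∈ M`. -/
structure MultiFilt (n : ℕ) (V : Type) [AddCommGroup V] [Module ℂ V] : Type where
  E : Cone n → (Fin n → ℤ) → Submodule ℂ V
  mono : ∀ σ m m', dualLe n σ m m' → E σ m ≤ E σ m'
  top_of_empty : ∀ σ : Cone n, σ.1 = ∅ → ∀ m, E σ m = ⊤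
  chain_bot : ∀ (σ : Cone n) (ms : ℤ → Fin n → ℤ),
    (∀ i : ℤ, dualLt n σ (ms (i - 1)) (ms i)) →
    ∃ i₀ : ℤ, ∀ i ≤ i₀, E σ (ms i) = ⊥
  finite_support : ∃ S : Finset (Cone n × (Fin n → ℤ)), ∀ (σ : Cone n) (m : Fin n → ℤ),
    ¬ (E σ m : Set V) ⊆ (⋃ m' ∈ {m' | dualLt n σ m' m}, (E σ m' : Set V)) →
    ∃ q ∈ S, q.1 = σ ∧ inPerp n σ (m - q.2)
  facet_union : ∀ σ τ : Cone n, τ.1 ⊆ σ.1 → τ.1.card + 1 = σ.1.card →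
    ∀ mτ : Fin n → ℤ, dualLe n σ 0 mτ → inPerp n τ mτ →
    (∀ w : Fin n → ℤ, inPerp n τ w ↔ ∃ (v : Fin n → ℤ) (k : ℤ), inPerp n σ v ∧ w = v + k • mτ) →
    ∀ m, E τ m = ⨆ i : ℕ, E σ (m + (i : ℤ) • mτ)

/-- A pointwise injection `E ⊆ F` of families of multifiltrations is elementary with
parameters `(k₀, σ₀, m₀)`. -/
structure IsElementary {n : ℕ} {V : Type} [AddCommGroup V] [Module ℂ V]
    (E F : MultiFilt n V) (k₀ : ℕ) (σ₀ : Cone n) (m₀ : Fin n → ℤ) : Prop where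
  le : ∀ σ m, E.E σ m ≤ F.E σ m
  dim : σ₀.1.card = k₀
  eq_of_lt : ∀ σ m, σ.1.card < k₀ → E.E σ m = F.E σ m
  ne_iff : ∀ (σ : Cone n) (m : Fin n → ℤ), σ.1.card = k₀ →
    (E.E σ m ≠ F.E σ m ↔ σ = σ₀ ∧ inPerp n σ₀ (m - m₀))
  rank_step : Module.finrank ℂ (F.E σ₀ m₀) = Module.finrank ℂ (E.E σ₀ m₀) + 1
  eq_of_gt : ∀ σ m, k₀ < σ.1.card → ¬(σ₀.1 ⊂ σ.1 ∧ dualLe n σ₀ m m₀) → E.E σ m = F.E σ m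
  inf_of_gt : ∀ σ m, k₀ < σ.1.card → σ₀.1 ⊂ σ.1 → dualLe n σ₀ m m₀ →
    E.E σ m = F.E σ m ⊓ E.E σ₀ m₀


/-- A saturated elementary injection `E ⊆ F` with parameters `(k₀, σ₀, m₀)` and weight `wt`:
for each ray `ρ ∉ σ₀(1)`, `a ρ` is the threshold of the pair `(σ₀ + ρ, m₀)` (with respect to any
admissible auxiliary character `w`); saturation says the set of weights where the dimension
jumps is exactly `(m₀ + σ₀^⊥) ∩ (m_σ + σ^∨)`, for every cone `σ` having `σ₀` as a face; and the
weight is `𝐦_Σ = Σ_{ρ∈σ₀(1)} ⟨m₀,u_ρ⟩ + Σ_{ρ∉σ₀(1)} (⟨m₀,u_ρ⟩ + a_ρ)` (the second sum being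
dropped when `dim σ₀ = n`). -/
def IsSaturatedElementary {n : ℕ} {V : Type} [AddCommGroup V] [Module ℂ V]
    (E F : MultiFilt n V) (k₀ : ℕ) (σ₀ : Cone n) (m₀ : Fin n → ℤ) (wt : ℤ) : Prop :=
  IsElementary E F k₀ σ₀ m₀ ∧
  ∃ a : Fin (n + 1) → ℤ,
    (∀ ρ ∉ σ₀.1, ∀ w : Fin n → ℤ, (∀ i ∈ σ₀.1, pair n w i = 0) → pair n w ρ = 1 →
      ∀ τ : Cone n, τ.1 = insert ρ σ₀.1 →
      ∀ i : ℤ, (Module.finrank ℂ (F.E τ (m₀ + i • w)) =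
        Module.finrank ℂ (E.E τ (m₀ + i • w)) + 1 ↔ a ρ ≤ i)) ∧
    (∀ σ : Cone n, σ₀.1 ⊆ σ.1 → ∀ w : Fin (n + 1) → Fin n → ℤ,
      (∀ ρ ∈ σ.1 \ σ₀.1, pair n (w ρ) ρ = 1 ∧ ∀ ρ' ∈ σ.1, ρ' ≠ ρ → pair n (w ρ) ρ' = 0) →
      ∀ m : Fin n → ℤ,
        (Module.finrank ℂ (F.E σ m) = Module.finrank ℂ (E.E σ m) + 1 ↔
          inPerp n σ₀ (m - m₀) ∧ dualLe n σ (m₀ + ∑ ρ ∈ σ.1 \ σ₀.1, a ρ • w ρ) m)) ∧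
    wt = (∑ ρ ∈ σ₀.1, pair n m₀ ρ) +
      (if σ₀.1.card = n then 0 else ∑ ρ ∈ σ₀.1ᶜ, (pair n m₀ ρ + a ρ))

/-- The assignment of subspaces of `ℂ²` attached to the normalized data `(c_i, L_i)`:
`E^σ_m = ℂ²` if `⟨m,u_ρ⟩ ≥ 0` for all rays `ρ` of `σ`; `E^σ_m = L_i` if `ρ_i ∈ σ(1)`,
`-c_i ≤ ⟨m,u_{ρ_i}⟩ < 0` and `⟨m,u_{ρ'}⟩ ≥ 0` for every other ray `ρ'` of `σ`;
and `E^σ_m = 0` otherwise. -/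
noncomputable def refSheaf (n : ℕ) (L : Fin (n + 1) → Submodule ℂ (Fin 2 → ℂ))
    (c : Fin (n + 1) → ℕ) : Cone n → (Fin n → ℤ) → Submodule ℂ (Fin 2 → ℂ) := fun σ m =>
  if ∀ i ∈ σ.1, 0 ≤ pair n m i then ⊤
  else
    ⨆ (i : Fin (n + 1)) (_ : i ∈ σ.1 ∧ -(c i : ℤ) ≤ pair n m i ∧ pair n m i < 0 ∧
      ∀ j ∈ σ.1, j ≠ i → 0 ≤ pair n m j), L i

lemma pair_add (n : ℕ) (m m' : Fin n → ℤ) (i : Fin (n+1)) :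
    pair n (m + m') i = pair n m i + pair n m' i := by
  simp [pair, add_mul, Finset.sum_add_distrib]

lemma pair_sub (n : ℕ) (m m' : Fin n → ℤ) (i : Fin (n+1)) :
    pair n (m - m') i = pair n m i - pair n m' i := by
  simp [pair, sub_mul, Finset.sum_sub_distrib]

lemma pair_smul (n : ℕ) (z : ℤ) (m : Fin n → ℤ) (i : Fin (n+1)) :
    pair n (z • m) i = z * pair n m i := by
  simp [pair, Finset.mul_sum, mul_assoc]

lemma pair_sum (n : ℕ) {α : Type*} (s : Finset α) (g : α → Fin n → ℤ) (i : Fin (n+1)) :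
    pair n (∑ x ∈ s, g x) i = ∑ x ∈ s, pair n (g x) i := by
  classical
  induction s using Finset.induction with
  | empty => simp [pair]
  | @insert a s h ih => rw [Finset.sum_insert h, pair_add, ih, Finset.sum_insert h]

lemma pair_fzero (n : ℕ) (m : Fin n → ℤ) : pair n m 0 = -∑ j, m j := by
  simp [pair, uGen]

lemma pair_succ (n : ℕ) (m : Fin n → ℤ) (j : Fin n) : pair n m (Fin.succ j) = m j := by
  simp [pair, uGen, Pi.single_apply]

lemma dualLe_iff (n : ℕ) (σ : Cone n) (m m' : Fin n → ℤ) :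
    dualLe n σ m m' ↔ ∀ x ∈ σ.1, pair n m x ≤ pair n m' x := by
  unfold dualLe
  refine forall₂_congr fun x hx => ?_
  rw [pair_sub]; omega

lemma exists_rep (n : ℕ) (σ : Cone n) (f : Fin (n+1) → ℤ) :
    ∃ m : Fin n → ℤ, ∀ x ∈ σ.1, pair n m x = f x := by
  by_cases h0 : (0 : Fin (n+1)) ∈ σ.1
  · have hy : ∃ y, y ∉ σ.1 := by
      by_contra h; push_neg at h; exact σ.2 (Finset.eq_univ_iff_forall.2 h)
    obtain ⟨y, hy⟩ := hy
    have hy0 : y ≠ 0 := fun h => hy (h ▸ h0)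
    obtain ⟨js, rfl⟩ : ∃ j : Fin n, y = Fin.succ j := ⟨y.pred hy0, (Fin.succ_pred y hy0).symm⟩
    set A : ℤ := -(f 0) - ∑ j ∈ Finset.univ \ {js}, f (Fin.succ j) with hA
    refine ⟨Function.update (fun j => f (Fin.succ j)) js A, fun x hx => ?_⟩
    cases x using Fin.cases with
    | zero =>
        rw [pair_fzero, Finset.sum_update_of_mem (Finset.mem_univ _)]
        rw [hA]; ring
    | succ j =>
        have hj : j ≠ js := fun h => hy (h ▸ hx)
        rw [pair_succ, Function.update_of_ne hj]
  · refine ⟨fun j => f (Fin.succ j), fun x hx => ?_⟩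
    cases x using Fin.cases with
    | zero => exact absurd hx h0
    | succ j => rw [pair_succ]

noncomputable def rep (n : ℕ) (σ : Cone n) (f : Fin (n+1) → ℤ) : Fin n → ℤ :=
  (exists_rep n σ f).choose

lemma rep_spec (n : ℕ) (σ : Cone n) (f : Fin (n+1) → ℤ) :
    ∀ x ∈ σ.1, pair n (rep n σ f) x = f x :=
  (exists_rep n σ f).choose_spec

section RefSheaf
variable (n : ℕ) (L : Fin (n + 1) → Submodule ℂ (Fin 2 → ℂ)) (c : Fin (n + 1) → ℕ)

lemma refSheaf_eq_top {σ : Cone n} {m : Fin n → ℤ} (h : ∀ i ∈ σ.1, 0 ≤ pair n m i) :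
    refSheaf n L c σ m = ⊤ := by
  simp only [refSheaf]; exact if_pos h

lemma refSheaf_eq_bot {σ : Cone n} {m : Fin n → ℤ} (h1 : ¬ ∀ i ∈ σ.1, 0 ≤ pair n m i)
    (h2 : ∀ i ∈ σ.1, -(c i : ℤ) ≤ pair n m i → pair n m i < 0 →
      ∃ x ∈ σ.1, x ≠ i ∧ pair n m x < 0) : refSheaf n L c σ m = ⊥ := by
  simp only [refSheaf, if_neg h1]
  refine iSup_eq_bot.2 fun i => iSup_neg ?_
  rintro ⟨hi, hw, hneg, hpos⟩
  obtain ⟨x, hx, hxi, hxneg⟩ := h2 i hi hw hneg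
  exact absurd (hpos x hx hxi) (not_le.2 hxneg)

lemma refSheaf_eq_line {σ : Cone n} {m : Fin n → ℤ} {i : Fin (n+1)} (hi : i ∈ σ.1)
    (hw : -(c i : ℤ) ≤ pair n m i) (hneg : pair n m i < 0)
    (hpos : ∀ x ∈ σ.1, x ≠ i → 0 ≤ pair n m x) : refSheaf n L c σ m = L i := by
  have h1 : ¬ ∀ x ∈ σ.1, 0 ≤ pair n m x := fun h => absurd (h i hi) (not_le.2 hneg)
  simp only [refSheaf, if_neg h1]
  apply le_antisymm
  · refine iSup_le fun i' => iSup_le fun hP => ?_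
    rcases eq_or_ne i' i with rfl | hne
    · exact le_rfl
    · exact absurd (hP.2.2.2 i hi (Ne.symm hne)) (not_le.2 hneg)
  · exact le_iSup_of_le i (le_iSup_of_le ⟨hi, hw, hneg, hpos⟩ le_rfl)

lemma refSheaf_mono {σ : Cone n} {m m' : Fin n → ℤ}
    (h : ∀ x ∈ σ.1, pair n m x ≤ pair n m' x) :
    refSheaf n L c σ m ≤ refSheaf n L c σ m' := by
  by_cases ht : ∀ i ∈ σ.1, 0 ≤ pair n m i
  · rw [refSheaf_eq_top n L c (fun i hi => le_trans (ht i hi) (h i hi))]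
    exact le_top
  · conv_lhs => simp only [refSheaf, if_neg ht]
    refine iSup_le fun i => iSup_le ?_
    rintro ⟨hi, hw, hneg, hpos⟩
    by_cases h2 : 0 ≤ pair n m' i
    · rw [refSheaf_eq_top n L c (fun x hx => ?_)]
      · exact le_top
      · rcases eq_or_ne x i with rfl | hne
        · exact h2
        · exact le_trans (hpos x hx hne) (h x hx)
    · rw [refSheaf_eq_line n L c hi (le_trans hw (h i hi)) (not_le.1 h2)
        (fun x hx hxi => le_trans (hpos x hx hxi) (h x hx))]

lemma line_ne_bot (hL1 : ∀ i, Module.finrank ℂ (L i) = 1) (i : Fin (n+1)) : L i ≠ ⊥ := by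
  intro h
  have := hL1 i
  rw [h, finrank_bot] at this
  omega

end RefSheaf

section Rays
variable (n : ℕ) (i₀ : Fin (n+1))

def ray (i : Fin (n+1)) : Fin (n+1) := Equiv.swap 0 i₀ i

lemma ray_inj : Function.Injective (ray n i₀) := (Equiv.swap 0 i₀).injective

lemma ray_zero : ray n i₀ 0 = i₀ := Equiv.swap_apply_left 0 i₀

def SS (k : ℕ) : Finset (Fin (n+1)) :=
  (Finset.univ.filter (fun i : Fin (n+1) => (i : ℕ) < k)).image (ray n i₀)

lemma mem_SS_iff {x : Fin (n+1)} {k : ℕ} :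
    x ∈ SS n i₀ k ↔ ∃ i : Fin (n+1), (i : ℕ) < k ∧ ray n i₀ i = x := by
  simp [SS]

lemma ray_mem_SS {i : Fin (n+1)} {k : ℕ} (h : (i : ℕ) < k) : ray n i₀ i ∈ SS n i₀ k :=
  (mem_SS_iff n i₀).2 ⟨i, h, rfl⟩

lemma i₀_mem_SS {k : ℕ} (h : 0 < k) : i₀ ∈ SS n i₀ k := by
  rw [← ray_zero n i₀]; exact ray_mem_SS n i₀ (by simpa using h)

lemma SS_subset {k k' : ℕ} (h : k ≤ k') : SS n i₀ k ⊆ SS n i₀ k' := by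
  intro x hx
  obtain ⟨i, hik, rfl⟩ := (mem_SS_iff n i₀).1 hx
  exact ray_mem_SS n i₀ (lt_of_lt_of_le hik h)

lemma card_SS {k : ℕ} (h : k ≤ n + 1) : (SS n i₀ k).card = k := by
  rw [SS, Finset.card_image_of_injective _ (ray_inj n i₀)]
  have : Finset.univ.filter (fun i : Fin (n+1) => (i : ℕ) < k)
      = (Finset.univ : Finset (Fin k)).map (Fin.castLEEmb h) := by
    ext x
    simp only [Finset.mem_filter, Finset.mem_univ, true_and, Finset.mem_map]
    constructor
    · intro hx; exact ⟨⟨x.val, hx⟩, by simp [Fin.castLEEmb, Fin.castLE]⟩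
    · rintro ⟨y, rfl⟩
      simpa [Fin.castLEEmb, Fin.castLE] using y.isLt
  rw [this, Finset.card_map, Finset.card_univ, Fintype.card_fin]

lemma SS_ne_univ {k : ℕ} (h : k ≤ n) : SS n i₀ k ≠ Finset.univ := by
  intro he
  have := card_SS n i₀ (le_trans h (Nat.le_succ n))
  rw [he, Finset.card_univ, Fintype.card_fin] at this
  omega

end Rays


section Carve
variable (n : ℕ) (c : Fin (n+1) → ℕ) (p : ℕ → ℕ) (i₀ : Fin (n+1))

/-- Partial sum of the `p`'s. -/
def Pk (k : ℕ) : ℤ := ∑ i ∈ Finset.Ico 3 k, (p i : ℤ)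

lemma Pk_nonneg (k : ℕ) : 0 ≤ Pk p k :=
  Finset.sum_nonneg fun i _ => Int.ofNat_nonneg _

lemma Pk_mono {a b : ℕ} (h : a ≤ b) : Pk p a ≤ Pk p b :=
  Finset.sum_le_sum_of_subset_of_nonneg (Finset.Ico_subset_Ico le_rfl h)
    (fun i _ _ => Int.ofNat_nonneg _)

lemma Pk_succ {k : ℕ} (h : 3 ≤ k) : Pk p (k+1) = Pk p k + (p k : ℤ) :=
  Finset.sum_Ico_succ_top h _

/-- The region carved out by the single modification step `(k', j')`, with threshold `t`. -/
def NewC (k' : ℕ) (t : ℤ) (σ : Cone n) (m : Fin n → ℤ) : Prop :=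
  SS n i₀ k' ⊆ σ.1 ∧ pair n m i₀ ≤ -(c i₀ : ℤ) ∧ pair n m (ray n i₀ 1) ≤ t ∧
    ∀ i : Fin (n+1), 2 ≤ (i : ℕ) → (i : ℕ) < k' → pair n m (ray n i₀ i) ≤ 0

/-- The union of the carved regions of all steps up to stage `(k, j)`. -/
def Carved (k j : ℕ) (σ : Cone n) (m : Fin n → ℤ) : Prop :=
  ∃ k' j' : ℕ, 3 ≤ k' ∧ k' ≤ n ∧ 1 ≤ j' ∧ j' ≤ p k' ∧ (k' < k ∨ (k' = k ∧ j' ≤ j)) ∧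
    NewC n c i₀ k' (Pk p k' + (j' : ℤ) - 1) σ m

lemma carved_mono {k j j' : ℕ} (h : j ≤ j') {σ : Cone n} {m : Fin n → ℤ}
    (hc : Carved n c p i₀ k j σ m) : Carved n c p i₀ k j' σ m := by
  obtain ⟨a, b, h1, h2, h3, h4, h5, h6⟩ := hc
  exact ⟨a, b, h1, h2, h3, h4, by omega, h6⟩

lemma not_carved_30 {σ : Cone n} {m : Fin n → ℤ} : ¬ Carved n c p i₀ 3 0 σ m := by
  rintro ⟨a, b, h1, h2, h3, h4, h5, h6⟩; omega

lemma carved_stage_eq {k : ℕ} (h4 : 4 ≤ k) {σ : Cone n} {m : Fin n → ℤ} :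
    Carved n c p i₀ k 0 σ m ↔ Carved n c p i₀ (k-1) (p (k-1)) σ m := by
  constructor <;> rintro ⟨a, b, h1, h2, h3, hp', h5, h6⟩ <;> refine ⟨a, b, h1, h2, h3, hp', ?_, h6⟩
  · rcases eq_or_ne a (k-1) with rfl | hne
    · exact Or.inr ⟨rfl, hp'⟩
    · left; omega
  · left; omega

/-- Unfolding of stage `(k,j)` into the previous stage plus the new step. -/
lemma carved_succ {k j : ℕ} (h3 : 3 ≤ k) (hkn : k ≤ n) (h1 : 1 ≤ j) (hjp : j ≤ p k)
    {σ : Cone n} {m : Fin n → ℤ} :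
    Carved n c p i₀ k j σ m ↔ Carved n c p i₀ k (j-1) σ m ∨
      NewC n c i₀ k (Pk p k + (j : ℤ) - 1) σ m := by
  constructor
  · rintro ⟨a, b, ha1, ha2, ha3, ha4, ha5, ha6⟩
    by_cases hb : a < k ∨ (a = k ∧ b ≤ j - 1)
    · exact Or.inl ⟨a, b, ha1, ha2, ha3, ha4, hb, ha6⟩
    · have : a = k ∧ b = j := by omega
      obtain ⟨rfl, rfl⟩ := this
      exact Or.inr ha6
  · rintro (⟨a, b, ha1, ha2, ha3, ha4, ha5, ha6⟩ | hN)
    · exact ⟨a, b, ha1, ha2, ha3, ha4, by omega, ha6⟩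
    · exact ⟨k, j, h3, hkn, h1, hjp, Or.inr ⟨rfl, le_rfl⟩, hN⟩

/-- If the `ray 1` coordinate exceeds all previous thresholds, the point is not yet carved. -/
lemma not_carved_of_ray1_gt {k j : ℕ} (h1 : 1 ≤ j) {σ : Cone n} {m : Fin n → ℤ}
    (h : Pk p k + (j : ℤ) - 2 < pair n m (ray n i₀ 1)) : ¬ Carved n c p i₀ k (j-1) σ m := by
  rintro ⟨a, b, ha1, ha2, ha3, ha4, ha5, ha6⟩
  have hb : Pk p a + (b : ℤ) - 1 ≤ Pk p k + (j : ℤ) - 2 := by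
    rcases ha5 with h5 | ⟨rfl, h5⟩
    · have : Pk p (a+1) ≤ Pk p k := Pk_mono p (by omega)
      rw [Pk_succ p ha1] at this
      omega
    · omega
  exact absurd ha6.2.2.1 (by omega)

lemma exists_prev_step {v : ℤ} (h0 : 0 ≤ v) {k : ℕ} (hv : v < Pk p k) :
    ∃ k', 3 ≤ k' ∧ k' < k ∧ 1 ≤ p k' ∧ Pk p k' ≤ v ∧ v < Pk p k' + (p k' : ℤ) := by
  induction k with
  | zero => simp [Pk] at hv; omega
  | succ k ih =>
      by_cases h3 : 3 ≤ k
      · rw [Pk_succ p h3] at hv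
        by_cases hvk : v < Pk p k
        · obtain ⟨k', h⟩ := ih hvk
          exact ⟨k', h.1, by omega, h.2.2⟩
        · exact ⟨k, h3, by omega, by omega, by omega, by omega⟩
      · exfalso
        have : Pk p (k+1) = 0 := by
          rw [Pk]
          rw [Finset.Ico_eq_empty (by omega)]
          simp
        omega

/-- If the `ray 1` coordinate is nonnegative but at most the previous threshold, then the
point is carved at the previous stage. -/
lemma carved_prev {k j : ℕ} (h3 : 3 ≤ k) (hkn : k ≤ n) (h1 : 1 ≤ j) (hjp : j ≤ p k)
    {σ : Cone n} {m : Fin n → ℤ} (hσ : SS n i₀ k ⊆ σ.1)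
    (hi₀ : pair n m i₀ ≤ -(c i₀ : ℤ)) (hr0 : 0 ≤ pair n m (ray n i₀ 1))
    (hr : pair n m (ray n i₀ 1) ≤ Pk p k + (j : ℤ) - 2)
    (hrest : ∀ i : Fin (n+1), 2 ≤ (i : ℕ) → (i : ℕ) < k → pair n m (ray n i₀ i) ≤ 0) :
    Carved n c p i₀ k (j-1) σ m := by
  rcases Nat.lt_or_ge j 2 with hj2 | hj2
  · -- j = 1; use a step from an earlier level
    have hj1 : j = 1 := by omega
    subst hj1
    have hvlt : pair n m (ray n i₀ 1) < Pk p k := by omega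
    obtain ⟨k', hk3, hkk, hpk, hle, hlt⟩ := exists_prev_step p hr0 hvlt
    set b : ℕ := (pair n m (ray n i₀ 1) - Pk p k').toNat + 1 with hb
    have hbz : (b : ℤ) = pair n m (ray n i₀ 1) - Pk p k' + 1 := by omega
    refine ⟨k', b, hk3, by omega, by omega, by omega, Or.inl (by omega), ?_, hi₀, by omega, ?_⟩
    · exact Finset.Subset.trans (SS_subset n i₀ (by omega)) hσ
    · exact fun i hi2 hik => hrest i hi2 (by omega)
  · -- use step (k, j-1)
    refine ⟨k, j-1, h3, hkn, by omega, by omega, Or.inr ⟨rfl, le_rfl⟩, hσ, hi₀, ?_, hrest⟩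
    have : ((j - 1 : ℕ) : ℤ) = (j : ℤ) - 1 := by omega
    omega

end Carve

section Bounds
variable (n : ℕ) (c : Fin (n+1) → ℕ) (p : ℕ → ℕ) (i₀ : Fin (n+1))

/-- A bound exceeding all thresholds and window widths. -/
def B0 : ℤ := (∑ i ∈ Finset.range (n+1), (p i : ℤ)) + (∑ i : Fin (n+1), (c i : ℤ)) + 3

lemma Psum_nonneg : 0 ≤ ∑ i ∈ Finset.range (n+1), (p i : ℤ) :=
  Finset.sum_nonneg fun i _ => Int.ofNat_nonneg _

lemma Csum_nonneg : 0 ≤ ∑ i : Fin (n+1), (c i : ℤ) :=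
  Finset.sum_nonneg fun i _ => Int.ofNat_nonneg _

lemma B0_pos : 3 ≤ B0 n c p := by
  have := Psum_nonneg n p; have := Csum_nonneg n c; unfold B0; omega

lemma c_le_B0 (x : Fin (n+1)) : (c x : ℤ) ≤ B0 n c p - 3 := by
  have h1 : (c x : ℤ) ≤ ∑ i : Fin (n+1), (c i : ℤ) :=
    Finset.single_le_sum (fun i _ => Int.ofNat_nonneg _) (Finset.mem_univ x)
  have := Psum_nonneg n p; unfold B0; omega

lemma thr_le_B0 {k' j' : ℕ} (h3 : 3 ≤ k') (hn : k' ≤ n) (hj : j' ≤ p k') :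
    Pk p k' + (j' : ℤ) - 1 ≤ B0 n c p - 3 := by
  have h1 : Pk p k' + (j' : ℤ) ≤ ∑ i ∈ Finset.range (n+1), (p i : ℤ) := by
    have h2 : Pk p k' + (j' : ℤ) ≤ Pk p (k'+1) := by
      rw [Pk_succ p h3]; omega
    refine le_trans h2 ?_
    refine Finset.sum_le_sum_of_subset_of_nonneg ?_ (fun i _ _ => Int.ofNat_nonneg _)
    intro i hi
    simp only [Finset.mem_Ico] at hi
    simp only [Finset.mem_range]
    omega
  have := Csum_nonneg n c; unfold B0; omega

lemma val_one (h : 1 ≤ n) : ((1 : Fin (n+1)) : ℕ) = 1 := by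
  rw [Fin.val_one']; exact Nat.mod_eq_of_lt (by omega)

lemma ray1_mem_SS {k : ℕ} (h1 : 1 ≤ n) (hk : 1 < k) : ray n i₀ 1 ∈ SS n i₀ k :=
  ray_mem_SS n i₀ (by rw [val_one n h1]; omega)

lemma SS_cases {k' : ℕ} (h3 : 3 ≤ k') (hn : k' ≤ n) {x : Fin (n+1)} (hx : x ∈ SS n i₀ k') :
    x = i₀ ∨ x = ray n i₀ 1 ∨ ∃ i : Fin (n+1), 2 ≤ (i : ℕ) ∧ (i : ℕ) < k' ∧ x = ray n i₀ i := by
  obtain ⟨i, hik, rfl⟩ := (mem_SS_iff n i₀).1 hx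
  rcases Nat.lt_or_ge (i : ℕ) 2 with h2 | h2
  · rcases Nat.lt_or_ge (i : ℕ) 1 with h1 | h1
    · left
      have : i = 0 := Fin.ext (by simpa using h1)
      rw [this, ray_zero]
    · right; left
      have : i = 1 := Fin.ext (by rw [val_one n (by omega)]; omega)
      rw [this]
  · exact Or.inr (Or.inr ⟨i, h2, hik, rfl⟩)

lemma NewC_pair_le {k' : ℕ} {t : ℤ} (h3 : 3 ≤ k') (hn : k' ≤ n)
    (ht : t ≤ B0 n c p - 3) {σ : Cone n} {m : Fin n → ℤ}
    (h : NewC n c i₀ k' t σ m) :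
    ∀ x ∈ SS n i₀ k', pair n m x ≤ B0 n c p - 3 := by
  intro x hx
  obtain ⟨hss, hA, hB, hC⟩ := h
  have hc0 : (0:ℤ) ≤ c i₀ := Int.ofNat_nonneg _
  have hB3 := B0_pos n c p
  rcases SS_cases n i₀ h3 hn hx with rfl | rfl | ⟨i, hi2, hik, rfl⟩
  · omega
  · omega
  · have := hC i hi2 hik; omega

end Bounds

section Family
variable (n : ℕ) (L : Fin (n + 1) → Submodule ℂ (Fin 2 → ℂ))
  (c : Fin (n+1) → ℕ) (p : ℕ → ℕ) (i₀ : Fin (n+1))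

open Classical in
/-- The subspace assignment of the family at stage `(k, j)`. -/
noncomputable def mkE (k j : ℕ) : Cone n → (Fin n → ℤ) → Submodule ℂ (Fin 2 → ℂ) :=
  fun σ m => if Carved n c p i₀ k j σ m then ⊥ else refSheaf n L c σ m

lemma mkE_of_carved {k j : ℕ} {σ : Cone n} {m : Fin n → ℤ}
    (h : Carved n c p i₀ k j σ m) : mkE n L c p i₀ k j σ m = ⊥ := by
  simp only [mkE]; exact if_pos h

lemma mkE_of_not_carved {k j : ℕ} {σ : Cone n} {m : Fin n → ℤ}
    (h : ¬ Carved n c p i₀ k j σ m) : mkE n L c p i₀ k j σ m = refSheaf n L c σ m := by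
  simp only [mkE]; exact if_neg h

lemma carved_transfer {k j : ℕ} {σ τ : Cone n} (hsub : τ.1 ⊆ σ.1) {m m' : Fin n → ℤ}
    (h1 : ∀ x ∈ τ.1, pair n m' x = pair n m x)
    (h2 : ∀ x ∈ σ.1, x ∉ τ.1 → B0 n c p ≤ pair n m' x) :
    Carved n c p i₀ k j σ m' ↔ Carved n c p i₀ k j τ m := by
  have hB3 := B0_pos n c p
  constructor
  · rintro ⟨a, b, ha1, ha2, ha3, ha4, ha5, hN⟩
    have hthr : Pk p a + (b : ℤ) - 1 ≤ B0 n c p - 3 := thr_le_B0 n c p ha1 ha2 ha4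
    have hSSτ : SS n i₀ a ⊆ τ.1 := by
      intro x hx
      by_contra hxτ
      have hxσ : x ∈ σ.1 := hN.1 hx
      have := h2 x hxσ hxτ
      have := NewC_pair_le n c p i₀ ha1 ha2 hthr hN x hx
      omega
    have hi₀m : i₀ ∈ SS n i₀ a := i₀_mem_SS n i₀ (by omega)
    have hr1m : ray n i₀ 1 ∈ SS n i₀ a := ray1_mem_SS n i₀ (by omega) (by omega)
    refine ⟨a, b, ha1, ha2, ha3, ha4, ha5, hSSτ, ?_, ?_, ?_⟩
    · rw [← h1 i₀ (hSSτ hi₀m)]; exact hN.2.1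
    · rw [← h1 _ (hSSτ hr1m)]; exact hN.2.2.1
    · intro i hi2 hik
      rw [← h1 _ (hSSτ (ray_mem_SS n i₀ hik))]
      exact hN.2.2.2 i hi2 hik
  · rintro ⟨a, b, ha1, ha2, ha3, ha4, ha5, hN⟩
    have hi₀m : i₀ ∈ SS n i₀ a := i₀_mem_SS n i₀ (by omega)
    have hr1m : ray n i₀ 1 ∈ SS n i₀ a := ray1_mem_SS n i₀ (by omega) (by omega)
    refine ⟨a, b, ha1, ha2, ha3, ha4, ha5, Finset.Subset.trans hN.1 hsub, ?_, ?_, ?_⟩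
    · rw [h1 i₀ (hN.1 hi₀m)]; exact hN.2.1
    · rw [h1 _ (hN.1 hr1m)]; exact hN.2.2.1
    · intro i hi2 hik
      rw [h1 _ (hN.1 (ray_mem_SS n i₀ hik))]
      exact hN.2.2.2 i hi2 hik

lemma refSheaf_transfer {σ τ : Cone n} (hsub : τ.1 ⊆ σ.1) {m m' : Fin n → ℤ}
    (h1 : ∀ x ∈ τ.1, pair n m' x = pair n m x)
    (h2 : ∀ x ∈ σ.1, x ∉ τ.1 → 0 ≤ pair n m' x) :
    refSheaf n L c σ m' = refSheaf n L c τ m := by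
  by_cases htop : ∀ x ∈ τ.1, 0 ≤ pair n m x
  · rw [refSheaf_eq_top n L c htop, refSheaf_eq_top]
    intro x hx
    by_cases hxτ : x ∈ τ.1
    · rw [h1 x hxτ]; exact htop x hxτ
    · exact h2 x hx hxτ
  · have htopσ : ¬ ∀ x ∈ σ.1, 0 ≤ pair n m' x := by
      intro h
      exact htop fun x hx => (h1 x hx) ▸ h x (hsub hx)
    have hcond : ∀ i : Fin (n+1),
        (i ∈ σ.1 ∧ -(c i : ℤ) ≤ pair n m' i ∧ pair n m' i < 0 ∧
          ∀ x ∈ σ.1, x ≠ i → 0 ≤ pair n m' x) ↔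
        (i ∈ τ.1 ∧ -(c i : ℤ) ≤ pair n m i ∧ pair n m i < 0 ∧
          ∀ x ∈ τ.1, x ≠ i → 0 ≤ pair n m x) := by
      intro i
      constructor
      · rintro ⟨hi, hw, hneg, hpos⟩
        have hiτ : i ∈ τ.1 := by
          by_contra hiτ
          exact absurd (h2 i hi hiτ) (not_le.2 hneg)
        rw [h1 i hiτ] at hw hneg
        exact ⟨hiτ, hw, hneg, fun x hx hxi => (h1 x hx) ▸ hpos x (hsub hx) hxi⟩
      · rintro ⟨hi, hw, hneg, hpos⟩
        rw [← h1 i hi] at hw hneg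
        refine ⟨hsub hi, hw, hneg, fun x hx hxi => ?_⟩
        by_cases hxτ : x ∈ τ.1
        · rw [h1 x hxτ]; exact hpos x hxτ hxi
        · exact h2 x hx hxτ
    simp only [refSheaf, if_neg htop, if_neg htopσ]
    refine le_antisymm (iSup_le fun i => iSup_le fun hp => ?_)
      (iSup_le fun i => iSup_le fun hp => ?_)
    · exact le_iSup_of_le i (le_iSup_of_le ((hcond i).1 hp) le_rfl)
    · exact le_iSup_of_le i (le_iSup_of_le ((hcond i).2 hp) le_rfl)

lemma mkE_transfer {k j : ℕ} {σ τ : Cone n} (hsub : τ.1 ⊆ σ.1) {m m' : Fin n → ℤ}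
    (h1 : ∀ x ∈ τ.1, pair n m' x = pair n m x)
    (h2 : ∀ x ∈ σ.1, x ∉ τ.1 → B0 n c p ≤ pair n m' x) :
    mkE n L c p i₀ k j σ m' = mkE n L c p i₀ k j τ m := by
  have hB3 := B0_pos n c p
  have h2' : ∀ x ∈ σ.1, x ∉ τ.1 → 0 ≤ pair n m' x := fun x hx hxτ => by
    have := h2 x hx hxτ; omega
  by_cases hc : Carved n c p i₀ k j τ m
  · rw [mkE_of_carved n L c p i₀ hc,
      mkE_of_carved n L c p i₀ ((carved_transfer n c p i₀ hsub h1 h2).2 hc)]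
  · rw [mkE_of_not_carved n L c p i₀ hc,
      mkE_of_not_carved n L c p i₀ (fun h => hc ((carved_transfer n c p i₀ hsub h1 h2).1 h)),
      refSheaf_transfer n L c hsub h1 h2']

lemma pair_zero' (i : Fin (n+1)) : pair n 0 i = 0 := by simp [pair]

lemma carved_anti {k j : ℕ} {σ : Cone n} {m m' : Fin n → ℤ}
    (h : ∀ x ∈ σ.1, pair n m x ≤ pair n m' x)
    (hc : Carved n c p i₀ k j σ m') : Carved n c p i₀ k j σ m := by
  obtain ⟨a, b, ha1, ha2, ha3, ha4, ha5, hss, hA, hB, hC⟩ := hc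
  have hi₀m : i₀ ∈ SS n i₀ a := i₀_mem_SS n i₀ (by omega)
  have hr1m : ray n i₀ 1 ∈ SS n i₀ a := ray1_mem_SS n i₀ (by omega) (by omega)
  refine ⟨a, b, ha1, ha2, ha3, ha4, ha5, hss,
    le_trans (h i₀ (hss hi₀m)) hA, le_trans (h _ (hss hr1m)) hB, fun i hi2 hik =>
      le_trans (h _ (hss (ray_mem_SS n i₀ hik))) (hC i hi2 hik)⟩

lemma mkE_mono {k j : ℕ} {σ : Cone n} {m m' : Fin n → ℤ} (hle : dualLe n σ m m') :
    mkE n L c p i₀ k j σ m ≤ mkE n L c p i₀ k j σ m' := by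
  have h : ∀ x ∈ σ.1, pair n m x ≤ pair n m' x := (dualLe_iff n σ m m').1 hle
  by_cases hm : Carved n c p i₀ k j σ m
  · rw [mkE_of_carved n L c p i₀ hm]; exact bot_le
  · rw [mkE_of_not_carved n L c p i₀ hm,
      mkE_of_not_carved n L c p i₀ (fun hm' => hm (carved_anti n c p i₀ h hm'))]
    exact refSheaf_mono n L c h

lemma mkE_top {k j : ℕ} {σ : Cone n} (he : σ.1 = ∅) (m : Fin n → ℤ) :
    mkE n L c p i₀ k j σ m = ⊤ := by
  have hnc : ¬ Carved n c p i₀ k j σ m := by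
    rintro ⟨a, b, ha1, ha2, ha3, ha4, ha5, hss, -⟩
    have : i₀ ∈ σ.1 := hss (i₀_mem_SS n i₀ (by omega))
    rw [he] at this
    exact absurd this (Finset.notMem_empty i₀)
  rw [mkE_of_not_carved n L c p i₀ hnc]
  exact refSheaf_eq_top n L c (fun x hx => absurd (he ▸ hx) (Finset.notMem_empty x))

lemma refSheaf_bot_of_sum {σ : Cone n} {m : Fin n → ℤ}
    (hs : ∑ x ∈ σ.1, pair n m x < -∑ x ∈ σ.1, (c x : ℤ)) :
    refSheaf n L c σ m = ⊥ := by
  have hC : (0:ℤ) ≤ ∑ x ∈ σ.1, (c x : ℤ) := Finset.sum_nonneg fun x _ => Int.ofNat_nonneg _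
  refine refSheaf_eq_bot n L c (fun h => ?_) (fun i hi hw hneg => ?_)
  · have : (0:ℤ) ≤ ∑ x ∈ σ.1, pair n m x := Finset.sum_nonneg h
    omega
  · by_contra hno
    push_neg at hno
    have hsplit : pair n m i + ∑ x ∈ σ.1.erase i, pair n m x = ∑ x ∈ σ.1, pair n m x :=
      Finset.add_sum_erase _ _ hi
    have hpos : (0:ℤ) ≤ ∑ x ∈ σ.1.erase i, pair n m x :=
      Finset.sum_nonneg fun x hx => hno x (Finset.mem_of_mem_erase hx)
        (Finset.ne_of_mem_erase hx)
    have hci : (c i : ℤ) ≤ ∑ x ∈ σ.1, (c x : ℤ) :=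
      Finset.single_le_sum (fun x _ => Int.ofNat_nonneg _) hi
    omega

lemma mkE_chain (k j : ℕ) (σ : Cone n) (ms : ℤ → Fin n → ℤ)
    (h : ∀ i : ℤ, dualLt n σ (ms (i - 1)) (ms i)) :
    ∃ I : ℤ, ∀ i ≤ I, mkE n L c p i₀ k j σ (ms i) = ⊥ := by
  rcases Finset.eq_empty_or_nonempty σ.1 with he | hne
  · exact absurd (fun x hx => absurd (he ▸ hx) (Finset.notMem_empty x)) (h 0).2
  set s : ℤ → ℤ := fun i => ∑ x ∈ σ.1, pair n (ms i) x with hsdef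
  have hstep : ∀ i : ℤ, s (i-1) + 1 ≤ s i := by
    intro i
    obtain ⟨hle, hnp⟩ := h i
    have hle' : ∀ x ∈ σ.1, pair n (ms (i-1)) x ≤ pair n (ms i) x := (dualLe_iff n σ _ _).1 hle
    have hnp' : ∃ x ∈ σ.1, pair n (ms i - ms (i-1)) x ≠ 0 := by
      simp only [inPerp] at hnp; push_neg at hnp; exact hnp
    obtain ⟨x, hx, hxne⟩ := hnp'
    rw [pair_sub] at hxne
    have h1 : s i - s (i-1) = ∑ x ∈ σ.1, (pair n (ms i) x - pair n (ms (i-1)) x) := by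
      rw [hsdef]; simp [Finset.sum_sub_distrib]
    have h2 : pair n (ms i) x - pair n (ms (i-1)) x ≤
        ∑ x ∈ σ.1, (pair n (ms i) x - pair n (ms (i-1)) x) :=
      Finset.single_le_sum (fun y hy => sub_nonneg.2 (hle' y hy)) hx
    have h3 := hle' x hx
    omega
  have hdesc : ∀ N : ℕ, s (-(N:ℤ)) ≤ s 0 - N := by
    intro N
    induction N with
    | zero => simp
    | succ N ih =>
        have h2 := hstep (-(N:ℤ))
        rw [show (-(((N+1):ℕ):ℤ)) = (-(N:ℤ)) - 1 by push_cast; ring]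
        have hc1 : (((N+1):ℕ):ℤ) = (N:ℤ) + 1 := by push_cast; ring
        omega
  set Cs : ℤ := ∑ x ∈ σ.1, (c x : ℤ) with hCs
  refine ⟨-((s 0 + Cs).natAbs + 1 : ℕ), fun i hi => ?_⟩
  obtain ⟨N, rfl⟩ : ∃ N : ℕ, i = -(N:ℤ) := ⟨(-i).toNat, by omega⟩
  have h4 := hdesc N
  have h5 : s (-(N:ℤ)) < -Cs := by omega
  by_cases hcar : Carved n c p i₀ k j σ (ms (-(N:ℤ)))
  · exact mkE_of_carved n L c p i₀ hcar
  · rw [mkE_of_not_carved n L c p i₀ hcar]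
    exact refSheaf_bot_of_sum n L c h5

lemma mkE_facet (k j : ℕ) (σ τ : Cone n) (hsub : τ.1 ⊆ σ.1)
    (hcard : τ.1.card + 1 = σ.1.card) (mτ : Fin n → ℤ) (h0le : dualLe n σ 0 mτ)
    (hperp : inPerp n τ mτ)
    (hgen : ∀ w : Fin n → ℤ, inPerp n τ w ↔
      ∃ (v : Fin n → ℤ) (kk : ℤ), inPerp n σ v ∧ w = v + kk • mτ)
    (m : Fin n → ℤ) :
    mkE n L c p i₀ k j τ m = ⨆ i : ℕ, mkE n L c p i₀ k j σ (m + (i : ℤ) • mτ) := by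
  obtain ⟨ρ, hρ⟩ : ∃ ρ, σ.1 \ τ.1 = {ρ} :=
    Finset.card_eq_one.1 (by rw [Finset.card_sdiff_of_subset hsub]; omega)
  have hρσ : ρ ∈ σ.1 := (Finset.mem_sdiff.1 (hρ ▸ Finset.mem_singleton_self ρ)).1
  have hρτ : ρ ∉ τ.1 := (Finset.mem_sdiff.1 (hρ ▸ Finset.mem_singleton_self ρ)).2
  have hmem : ∀ x ∈ σ.1, x ≠ ρ → x ∈ τ.1 := by
    intro x hx hne
    by_contra hh
    exact hne (Finset.mem_singleton.1 (hρ ▸ Finset.mem_sdiff.2 ⟨hx, hh⟩))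
  have hmτ0 : ∀ x ∈ σ.1, 0 ≤ pair n mτ x := by
    intro x hx
    have := h0le x hx
    rwa [sub_zero] at this
  have hgen1 : pair n mτ ρ = 1 := by
    obtain ⟨wv, hwv⟩ := exists_rep n σ (fun x => if x = ρ then 1 else 0)
    have hwperp : inPerp n τ wv := fun x hx => by
      rw [hwv x (hsub hx), if_neg (fun h => hρτ (by rw [← h]; exact hx))]
    obtain ⟨v, kk, hv, heq⟩ := (hgen wv).1 hwperp
    have h1 : pair n wv ρ = 1 := by rw [hwv ρ hρσ, if_pos rfl]
    have h2 : pair n wv ρ = pair n v ρ + kk * pair n mτ ρ := by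
      rw [heq, pair_add, pair_smul]
    have h3 : pair n v ρ = 0 := hv ρ hρσ
    have h4 : kk * pair n mτ ρ = 1 := by omega
    have h5 := hmτ0 ρ hρσ
    rcases Int.mul_eq_one_iff_eq_one_or_neg_one.1 h4 with ⟨-, h⟩ | ⟨-, h⟩ <;> omega
  set ib : ℕ := (pair n m ρ).natAbs + (B0 n c p).natAbs + 1 with hib
  have hbig : ∀ i : ℕ, ib ≤ i → mkE n L c p i₀ k j σ (m + (i:ℤ) • mτ) = mkE n L c p i₀ k j τ m := by
    intro i hi
    refine mkE_transfer n L c p i₀ hsub ?_ ?_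
    · intro x hx
      rw [pair_add, pair_smul, hperp x hx]
      ring
    · intro x hx hxτ
      have hxρ : x = ρ := by
        by_contra hne
        exact hxτ (hmem x hx hne)
      subst hxρ
      rw [pair_add, pair_smul, hgen1]
      omega
  apply le_antisymm
  · rw [← hbig ib le_rfl]
    exact le_iSup (fun i : ℕ => mkE n L c p i₀ k j σ (m + (i:ℤ) • mτ)) ib
  · refine iSup_le fun i => ?_
    rcases le_or_gt ib i with hle | hlt
    · rw [hbig i hle]
    · have hmono : mkE n L c p i₀ k j σ (m + (i:ℤ) • mτ) ≤
          mkE n L c p i₀ k j σ (m + (ib:ℤ) • mτ) := by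
        refine mkE_mono n L c p i₀ (fun x hx => ?_)
        have h1 : pair n (m + (ib:ℤ) • mτ - (m + (i:ℤ) • mτ)) x
            = ((ib:ℤ) - i) * pair n mτ x := by
          rw [pair_sub, pair_add, pair_add, pair_smul, pair_smul]
          ring
        rw [h1]
        have := hmτ0 x hx
        have hii : (i:ℤ) ≤ (ib:ℤ) := by omega
        exact mul_nonneg (by omega) this
      rw [hbig ib le_rfl] at hmono
      exact hmono

lemma mkE_low_bot {k j : ℕ} {σ : Cone n} {m : Fin n → ℤ} {x : Fin (n+1)}
    (hx : x ∈ σ.1) (hlow : pair n m x < -(B0 n c p)) :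
    mkE n L c p i₀ k j σ m = ⊥ := by
  have hB := B0_pos n c p
  have hcx := c_le_B0 n c p x
  by_cases hcar : Carved n c p i₀ k j σ m
  · exact mkE_of_carved n L c p i₀ hcar
  · rw [mkE_of_not_carved n L c p i₀ hcar]
    refine refSheaf_eq_bot n L c (fun h => by have := h x hx; omega)
      (fun i hi hw hneg => ?_)
    rcases eq_or_ne i x with rfl | hne
    · omega
    · exact ⟨x, hx, Ne.symm hne, by omega⟩

lemma mkE_finite (k j : ℕ) : ∃ S : Finset (Cone n × (Fin n → ℤ)),
    ∀ (σ : Cone n) (m : Fin n → ℤ),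
    ¬ (mkE n L c p i₀ k j σ m : Set (Fin 2 → ℂ)) ⊆
      (⋃ m' ∈ {m' | dualLt n σ m' m}, (mkE n L c p i₀ k j σ m' : Set (Fin 2 → ℂ))) →
    ∃ q ∈ S, q.1 = σ ∧ inPerp n σ (m - q.2) := by
  classical
  have hB := B0_pos n c p
  refine ⟨Finset.image (fun q : Cone n × (Fin (n+1) → ℤ) => (q.1, rep n q.1 q.2))
    ((Finset.univ : Finset (Cone n)) ×ˢ
      Fintype.piFinset fun _ : Fin (n+1) => Finset.Icc (-(B0 n c p)) (B0 n c p)), ?_⟩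
  intro σ m hjump
  have hbound : ∀ x ∈ σ.1, -(B0 n c p) ≤ pair n m x ∧ pair n m x ≤ B0 n c p := by
    intro x hx
    by_contra hout
    rw [not_and_or] at hout
    apply hjump
    obtain ⟨d, hd⟩ := exists_rep n σ (fun y => if y = x then 1 else 0)
    have hsub1 : ∀ y ∈ σ.1, pair n (m - (m - d)) y = pair n d y := by
      intro y hy
      rw [pair_sub, pair_sub]
      ring
    have hdual : dualLt n σ (m - d) m := by
      constructor
      · intro y hy
        rw [hsub1 y hy, hd y hy]
        split <;> omega
      · intro hperp'
        have := hperp' x hx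
        rw [hsub1 x hx, hd x hx, if_pos rfl] at this
        exact one_ne_zero this
    have hsubm : mkE n L c p i₀ k j σ m ≤ mkE n L c p i₀ k j σ (m - d) := by
      rcases hout with hlow | hhigh
      · rw [mkE_low_bot n L c p i₀ hx (by omega)]
        exact bot_le
      · have hhigh' : B0 n c p < pair n m x := by omega
        -- remove `x` from the cone and transfer both values
        obtain ⟨y, hy⟩ : ∃ y, y ∉ σ.1 := by
          by_contra hh
          push_neg at hh
          exact σ.2 (Finset.eq_univ_iff_forall.2 hh)
        have hτne : σ.1.erase x ≠ Finset.univ := fun h =>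
          hy (Finset.erase_subset x σ.1 (by rw [h]; exact Finset.mem_univ y))
        set τ : Cone n := ⟨σ.1.erase x, hτne⟩ with hτ
        have hτsub : τ.1 ⊆ σ.1 := Finset.erase_subset x σ.1
        have hpair_d : ∀ y' ∈ σ.1, pair n (m - d) y' = pair n m y' - (if y' = x then 1 else 0) := by
          intro y' hy'
          rw [pair_sub, hd y' hy']
        have e1 : mkE n L c p i₀ k j σ (m - d) = mkE n L c p i₀ k j τ m := by
          refine mkE_transfer n L c p i₀ hτsub ?_ ?_
          · intro y' hy'
            rw [hpair_d y' (hτsub hy'), if_neg (Finset.ne_of_mem_erase hy')]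
            ring
          · intro y' hy' hyτ
            have : y' = x := by
              by_contra hne
              exact hyτ (Finset.mem_erase.2 ⟨hne, hy'⟩)
            subst this
            rw [hpair_d y' hy', if_pos rfl]
            omega
        have e2 : mkE n L c p i₀ k j σ m = mkE n L c p i₀ k j τ m := by
          refine mkE_transfer n L c p i₀ hτsub (fun y' hy' => rfl) ?_
          intro y' hy' hyτ
          have : y' = x := by
            by_contra hne
            exact hyτ (Finset.mem_erase.2 ⟨hne, hy'⟩)
          subst this
          omega
        rw [e1, e2]
    intro v hv
    exact Set.mem_biUnion hdual (hsubm hv)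
  set f : Fin (n+1) → ℤ := fun x => max (-(B0 n c p)) (min (B0 n c p) (pair n m x)) with hf
  refine ⟨(σ, rep n σ f), Finset.mem_image.2 ⟨(σ, f), ?_, rfl⟩, rfl, ?_⟩
  · refine Finset.mem_product.2 ⟨Finset.mem_univ _, Fintype.mem_piFinset.2 fun x => ?_⟩
    rw [Finset.mem_Icc]
    constructor
    · exact le_max_left _ _
    · refine max_le (by omega) (min_le_left _ _)
  · intro x hx
    rw [pair_sub, rep_spec n σ f x hx]
    have hb := hbound x hx
    have : f x = pair n m x := by rw [hf]; simp only; omega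
    omega

end Family

section Elem
variable (n : ℕ) (L : Fin (n + 1) → Submodule ℂ (Fin 2 → ℂ))
  (c : Fin (n+1) → ℕ) (p : ℕ → ℕ) (i₀ : Fin (n+1))

lemma ray_eq_iff {i i' : Fin (n+1)} : ray n i₀ i = ray n i₀ i' ↔ i = i' :=
  (ray_inj n i₀).eq_iff

lemma ray1_ne_i₀ (h1 : 1 ≤ n) : ray n i₀ 1 ≠ i₀ := by
  intro h
  have h2 : ray n i₀ 1 = ray n i₀ 0 := by rw [ray_zero]; exact h
  have h3 := congrArg Fin.val (ray_inj n i₀ h2)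
  rw [val_one n h1] at h3
  simp at h3

lemma ray_ne_i₀ {i : Fin (n+1)} (h : (i:ℕ) ≠ 0) : ray n i₀ i ≠ i₀ := by
  intro hh
  have h2 : ray n i₀ i = ray n i₀ 0 := by rw [ray_zero]; exact hh
  exact h (by rw [ray_inj n i₀ h2]; rfl)

lemma ray_ne_ray1 (h1 : 1 ≤ n) {i : Fin (n+1)} (h : (i:ℕ) ≠ 1) :
    ray n i₀ i ≠ ray n i₀ 1 := by
  intro hh
  rw [ray_inj n i₀ hh] at h
  exact h (val_one n h1)

section Step
variable {k j : ℕ} {m₀ : Fin n → ℤ}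

/-- The jump locus predicate. -/
def JumpAt (σ : Cone n) (m : Fin n → ℤ) : Prop :=
  (∀ x ∈ SS n i₀ k, pair n m x = pair n m₀ x) ∧
    ∀ x ∈ σ.1, x ∉ SS n i₀ k → 0 ≤ pair n m x

variable (h3 : 3 ≤ k) (hkn : k ≤ n) (hj1 : 1 ≤ j) (hjp : j ≤ p k) (hc : 1 ≤ c i₀)
  (hA : pair n m₀ i₀ = -(c i₀ : ℤ))
  (hB : pair n m₀ (ray n i₀ 1) = Pk p k + (j:ℤ) - 1)
  (hC : ∀ i : Fin (n+1), 2 ≤ (i:ℕ) → (i:ℕ) < k → pair n m₀ (ray n i₀ i) = 0)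

include h3 hkn hj1 hjp hc hA hB hC

lemma key_bwd {σ : Cone n} {m : Fin n → ℤ} (hσ : SS n i₀ k ⊆ σ.1)
    (hj : JumpAt n i₀ (k := k) (m₀ := m₀) σ m) :
    Carved n c p i₀ k j σ m ∧ ¬ Carved n c p i₀ k (j-1) σ m ∧
      refSheaf n L c σ m = L i₀ := by
  have hn3 : 3 ≤ n := le_trans h3 hkn
  have hi₀m : i₀ ∈ SS n i₀ k := i₀_mem_SS n i₀ (by omega)
  have hr1m : ray n i₀ 1 ∈ SS n i₀ k := ray1_mem_SS n i₀ (by omega) (by omega)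
  have hPk := Pk_nonneg p k
  have hpA : pair n m i₀ = -(c i₀ : ℤ) := by rw [hj.1 i₀ hi₀m, hA]
  have hpB : pair n m (ray n i₀ 1) = Pk p k + (j:ℤ) - 1 := by rw [hj.1 _ hr1m, hB]
  have hpC : ∀ i : Fin (n+1), 2 ≤ (i:ℕ) → (i:ℕ) < k → pair n m (ray n i₀ i) = 0 :=
    fun i h2 hik => by rw [hj.1 _ (ray_mem_SS n i₀ hik), hC i h2 hik]
  refine ⟨?_, ?_, ?_⟩
  · exact (carved_succ n c p i₀ h3 hkn hj1 hjp).2 (Or.inr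
      ⟨hσ, le_of_eq hpA, le_of_eq hpB, fun i h2 hik => le_of_eq (hpC i h2 hik)⟩)
  · exact not_carved_of_ray1_gt n c p i₀ hj1 (by omega)
  · refine refSheaf_eq_line n L c (hσ hi₀m) hpA.ge (by omega) ?_
    intro x hx hxne
    by_cases hxS : x ∈ SS n i₀ k
    · rcases SS_cases n i₀ h3 hkn hxS with rfl | rfl | ⟨i, hi2, hik, rfl⟩
      · exact absurd rfl hxne
      · omega
      · rw [hpC i hi2 hik]
    · exact hj.2 x hx hxS

lemma key_fwd {σ : Cone n} {m : Fin n → ℤ} (hσ' : SS n i₀ k ⊆ σ.1)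
    (hcar : Carved n c p i₀ k j σ m) (hncar : ¬ Carved n c p i₀ k (j-1) σ m)
    (hF : refSheaf n L c σ m ≠ ⊥) : JumpAt n i₀ (k := k) (m₀ := m₀) σ m := by
  have hn3 : 3 ≤ n := le_trans h3 hkn
  have hi₀m : i₀ ∈ SS n i₀ k := i₀_mem_SS n i₀ (by omega)
  have hr1m : ray n i₀ 1 ∈ SS n i₀ k := ray1_mem_SS n i₀ (by omega) (by omega)
  have hc0 : (0:ℤ) ≤ c i₀ := Int.ofNat_nonneg _
  obtain ⟨hσ, hA', hB', hC'⟩ :=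
    ((carved_succ n c p i₀ h3 hkn hj1 hjp).1 hcar).resolve_left hncar
  -- pair m i₀ = -(c i₀)
  have hpA : pair n m i₀ = -(c i₀ : ℤ) := by
    rcases eq_or_lt_of_le hA' with h | h
    · exact h
    · exfalso
      refine hF (refSheaf_eq_bot n L c (fun hh => by have := hh i₀ (hσ hi₀m); omega) ?_)
      intro i hi hw hneg
      rcases eq_or_ne i i₀ with rfl | hne
      · omega
      · exact ⟨i₀, hσ hi₀m, Ne.symm hne, by omega⟩
  -- all coordinates other than i₀ are nonnegative
  have hval : ∀ x ∈ σ.1, x ≠ i₀ → 0 ≤ pair n m x := by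
    by_contra hno
    push_neg at hno
    obtain ⟨y, hy, hyne, hyneg⟩ := hno
    refine hF (refSheaf_eq_bot n L c (fun hh => by have := hh y hy; omega) ?_)
    intro i hi hw hneg
    rcases eq_or_ne i i₀ with rfl | hne
    · exact ⟨y, hy, hyne, hyneg⟩
    · exact ⟨i₀, hσ hi₀m, Ne.symm hne, by omega⟩
  have hr10 : 0 ≤ pair n m (ray n i₀ 1) :=
    hval _ (hσ hr1m) (ray1_ne_i₀ n i₀ (by omega))
  -- the ray-1 coordinate is exactly the threshold
  have hpB : pair n m (ray n i₀ 1) = Pk p k + (j:ℤ) - 1 := by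
    rcases eq_or_lt_of_le hB' with h | h
    · exact h
    · exact absurd (carved_prev n c p i₀ h3 hkn hj1 hjp hσ (le_of_eq hpA) hr10 (by omega)
        (fun i h2 hik => hC' i h2 hik)) hncar
  constructor
  · intro x hxS
    rcases SS_cases n i₀ h3 hkn hxS with rfl | rfl | ⟨i, hi2, hik, rfl⟩
    · rw [hpA, hA]
    · rw [hpB, hB]
    · rw [hC i hi2 hik]
      have h1 := hC' i hi2 hik
      have h2 := hval _ (hσ (ray_mem_SS n i₀ hik)) (ray_ne_i₀ n i₀ (by omega))
      omega
  · exact fun x hx hxS => hval x hx (fun h => hxS (h ▸ hi₀m))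

lemma jump_iff {σ : Cone n} {m : Fin n → ℤ} (hσ : SS n i₀ k ⊆ σ.1)
    (hL1 : ∀ i, Module.finrank ℂ (L i) = 1) :
    Module.finrank ℂ (mkE n L c p i₀ k (j-1) σ m) =
      Module.finrank ℂ (mkE n L c p i₀ k j σ m) + 1 ↔
    JumpAt n i₀ (k := k) (m₀ := m₀) σ m := by
  constructor
  · intro h
    by_cases hcar : Carved n c p i₀ k j σ m
    · by_cases hprev : Carved n c p i₀ k (j-1) σ m
      · rw [mkE_of_carved n L c p i₀ hcar, mkE_of_carved n L c p i₀ hprev, finrank_bot] at h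
        omega
      · rw [mkE_of_carved n L c p i₀ hcar, mkE_of_not_carved n L c p i₀ hprev,
          finrank_bot] at h
        have hF : refSheaf n L c σ m ≠ ⊥ := by
          intro hbot
          rw [hbot, finrank_bot] at h
          omega
        exact key_fwd n L c p i₀ h3 hkn hj1 hjp hc hA hB hC hσ hcar hprev hF
    · have hprev : ¬ Carved n c p i₀ k (j-1) σ m :=
        fun hp => hcar (carved_mono n c p i₀ (by omega) hp)
      rw [mkE_of_not_carved n L c p i₀ hprev, mkE_of_not_carved n L c p i₀ hcar] at h
      omega
  · intro hj'
    obtain ⟨h1, h2, h3'⟩ := key_bwd n L c p i₀ h3 hkn hj1 hjp hc hA hB hC hσ hj'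
    rw [mkE_of_carved n L c p i₀ h1, mkE_of_not_carved n L c p i₀ h2, h3', finrank_bot,
      hL1 i₀]

end Step
end Elem

section Assemble
variable (n : ℕ) (L : Fin (n + 1) → Submodule ℂ (Fin 2 → ℂ))
  (c : Fin (n+1) → ℕ) (p : ℕ → ℕ) (i₀ : Fin (n+1))

/-- The family of multifiltrations at stage `(k, j)`. -/
noncomputable def mkFam (k j : ℕ) : MultiFilt n (Fin 2 → ℂ) where
  E := mkE n L c p i₀ k j
  mono := fun _ _ _ h => mkE_mono n L c p i₀ h
  top_of_empty := fun _ he m => mkE_top n L c p i₀ he m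
  chain_bot := mkE_chain n L c p i₀ k j
  finite_support := mkE_finite n L c p i₀ k j
  facet_union := mkE_facet n L c p i₀ k j

lemma MultiFilt.ext' {V : Type} [AddCommGroup V] [Module ℂ V] {A B : MultiFilt n V}
    (h : A.E = B.E) : A = B := by
  cases A; cases B; cases h; rfl

lemma mkFam_E (k j : ℕ) : (mkFam n L c p i₀ k j).E = mkE n L c p i₀ k j := rfl

/-- The main construction: the saturated elementary injection at stage `(k, j)`. -/
lemma main_step (hL1 : ∀ i, Module.finrank ℂ (L i) = 1) (hc : 1 ≤ c i₀)
    {k j : ℕ} (h3 : 3 ≤ k) (hkn : k ≤ n) (hj1 : 1 ≤ j) (hjp : j ≤ p k) :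
    ∃ (σ₀ : Cone n) (m₀ : Fin n → ℤ),
      IsSaturatedElementary (mkFam n L c p i₀ k j) (mkFam n L c p i₀ k (j-1)) k σ₀ m₀
        (-(c i₀ : ℤ) + (∑ i ∈ Finset.Ico 3 k, (p i : ℤ)) + ((j : ℤ) - 1)) := by
  have hn3 : 3 ≤ n := le_trans h3 hkn
  have hPk := Pk_nonneg p k
  set σ₀ : Cone n := ⟨SS n i₀ k, SS_ne_univ n i₀ hkn⟩ with hσ₀
  set T : ℤ := Pk p k + (j:ℤ) - 1 with hT
  set f₀ : Fin (n+1) → ℤ :=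
    fun x => if x = i₀ then -(c i₀ : ℤ) else if x = ray n i₀ 1 then T else 0 with hf₀
  set m₀ : Fin n → ℤ := rep n σ₀ f₀ with hm₀
  have hi₀m : i₀ ∈ SS n i₀ k := i₀_mem_SS n i₀ (by omega)
  have hr1m : ray n i₀ 1 ∈ SS n i₀ k := ray1_mem_SS n i₀ (by omega) (by omega)
  have hr1ne : ray n i₀ 1 ≠ i₀ := ray1_ne_i₀ n i₀ (by omega)
  have hA : pair n m₀ i₀ = -(c i₀ : ℤ) := by
    rw [hm₀, rep_spec n σ₀ f₀ i₀ hi₀m, hf₀]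
    show (if i₀ = i₀ then -(c i₀ : ℤ) else if i₀ = ray n i₀ 1 then T else 0) = -(c i₀ : ℤ)
    rw [if_pos rfl]
  have hB : pair n m₀ (ray n i₀ 1) = T := by
    rw [hm₀, rep_spec n σ₀ f₀ _ hr1m, hf₀]
    show (if ray n i₀ 1 = i₀ then -(c i₀ : ℤ)
      else if ray n i₀ 1 = ray n i₀ 1 then T else 0) = T
    rw [if_neg hr1ne, if_pos rfl]
  have hC : ∀ i : Fin (n+1), 2 ≤ (i:ℕ) → (i:ℕ) < k → pair n m₀ (ray n i₀ i) = 0 := by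
    intro i h2 hik
    rw [hm₀, rep_spec n σ₀ f₀ _ (ray_mem_SS n i₀ hik), hf₀]
    show (if ray n i₀ i = i₀ then -(c i₀ : ℤ)
      else if ray n i₀ i = ray n i₀ 1 then T else 0) = 0
    rw [if_neg (ray_ne_i₀ n i₀ (i := i) (by omega)),
      if_neg (ray_ne_ray1 n i₀ (by omega) (i := i) (by omega))]
  have hB' : pair n m₀ (ray n i₀ 1) = Pk p k + (j:ℤ) - 1 := by rw [hB, hT]
  have hJm₀ : JumpAt n i₀ (k := k) (m₀ := m₀) σ₀ m₀ :=
    ⟨fun x _ => rfl, fun x hx hxS => absurd hx hxS⟩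
  obtain ⟨hcar₀, hncar₀, hline₀⟩ := key_bwd n L c p i₀ h3 hkn hj1 hjp hc hA hB' hC (le_refl _) hJm₀
  have hne_case : ∀ (σ : Cone n) (m : Fin n → ℤ),
      mkE n L c p i₀ k j σ m ≠ mkE n L c p i₀ k (j-1) σ m →
      Carved n c p i₀ k j σ m ∧ ¬ Carved n c p i₀ k (j-1) σ m ∧
        NewC n c i₀ k (Pk p k + (j:ℤ) - 1) σ m := by
    intro σ m hne
    by_cases hcar : Carved n c p i₀ k j σ m
    · by_cases hprev : Carved n c p i₀ k (j-1) σ m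
      · exact absurd (by rw [mkE_of_carved n L c p i₀ hcar,
          mkE_of_carved n L c p i₀ hprev]) hne
      · have hN := ((carved_succ n c p i₀ h3 hkn hj1 hjp).1 hcar).resolve_left hprev
        exact ⟨hcar, hprev, hN⟩
    · have hprev : ¬ Carved n c p i₀ k (j-1) σ m :=
        fun hp => hcar (carved_mono n c p i₀ (by omega) hp)
      exact absurd (by rw [mkE_of_not_carved n L c p i₀ hcar,
        mkE_of_not_carved n L c p i₀ hprev]) hne
  have hdual_imp : ∀ (σ : Cone n) (m : Fin n → ℤ), SS n i₀ k ⊆ σ.1 →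
      dualLe n σ₀ m m₀ → Carved n c p i₀ k j σ m := by
    intro σ m hσ hdle
    have h' := (dualLe_iff n σ₀ m m₀).1 hdle
    refine (carved_succ n c p i₀ h3 hkn hj1 hjp).2 (Or.inr ⟨hσ, ?_, ?_, ?_⟩)
    · have := h' i₀ hi₀m; omega
    · have h1 := h' _ hr1m; omega
    · intro i h2 hik
      have h1 := h' _ (ray_mem_SS n i₀ hik)
      have h2' := hC i h2 hik
      omega
  refine ⟨σ₀, m₀, ⟨?_, ?_⟩⟩
  · -- IsElementary
    refine ⟨?_, ?_, ?_, ?_, ?_, ?_, ?_⟩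
    · -- le
      intro σ m
      by_cases hcar : Carved n c p i₀ k j σ m
      · rw [mkFam_E, mkE_of_carved n L c p i₀ hcar]; exact bot_le
      · have hprev : ¬ Carved n c p i₀ k (j-1) σ m :=
          fun hp => hcar (carved_mono n c p i₀ (by omega) hp)
        rw [mkFam_E, mkFam_E, mkE_of_not_carved n L c p i₀ hcar,
          mkE_of_not_carved n L c p i₀ hprev]
    · -- dim
      exact card_SS n i₀ (by omega)
    · -- eq_of_lt
      intro σ m hlt
      by_contra hne
      obtain ⟨-, -, hN⟩ := hne_case σ m hne
      have hcc := Finset.card_le_card hN.1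
      rw [card_SS n i₀ (by omega)] at hcc
      omega
    · -- ne_iff
      intro σ m hcard
      constructor
      · intro hne
        obtain ⟨hcar, hprev, hN⟩ := hne_case σ m hne
        have hSeq : SS n i₀ k = σ.1 := Finset.eq_of_subset_of_card_le hN.1
          (by rw [hcard, card_SS n i₀ (by omega)])
        have hσeq : σ = σ₀ := Subtype.ext hSeq.symm
        subst hσeq
        have hF : refSheaf n L c σ₀ m ≠ ⊥ := by
          intro hbot
          apply hne
          rw [mkFam_E, mkFam_E, mkE_of_carved n L c p i₀ hcar,
            mkE_of_not_carved n L c p i₀ hprev, hbot]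
        have hJA := key_fwd n L c p i₀ h3 hkn hj1 hjp hc hA hB' hC hN.1 hcar hprev hF
        exact ⟨rfl, fun x hx => by rw [pair_sub, hJA.1 x hx, sub_self]⟩
      · rintro ⟨rfl, hperp⟩
        have hJA : JumpAt n i₀ (k := k) (m₀ := m₀) σ₀ m := by
          constructor
          · intro x hx
            have h1 := hperp x hx
            rw [pair_sub] at h1
            omega
          · intro x hx hxS
            exact absurd hx hxS
        obtain ⟨hcar, hprev, hline⟩ := key_bwd n L c p i₀ h3 hkn hj1 hjp hc hA hB' hC (le_refl _) hJA
        rw [mkFam_E, mkFam_E, mkE_of_carved n L c p i₀ hcar,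
          mkE_of_not_carved n L c p i₀ hprev, hline]
        exact (line_ne_bot n L hL1 i₀).symm
    · -- rank_step
      rw [mkFam_E, mkFam_E, mkE_of_carved n L c p i₀ hcar₀,
        mkE_of_not_carved n L c p i₀ hncar₀, hline₀, finrank_bot, hL1 i₀]
    · -- eq_of_gt
      intro σ m hgt hnot
      by_contra hne
      obtain ⟨hcar, hprev, hN⟩ := hne_case σ m hne
      refine hnot ⟨Finset.ssubset_iff_subset_ne.2 ⟨hN.1, fun h => ?_⟩, ?_⟩
      · have hcc : σ₀.1.card = k := card_SS n i₀ (by omega)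
        have h2 : σ₀.1.card = σ.1.card := by rw [h]
        omega
      · refine (dualLe_iff n σ₀ m m₀).2 fun x hx => ?_
        rcases SS_cases n i₀ h3 hkn hx with rfl | rfl | ⟨i, hi2, hik, rfl⟩
        · rw [hA]; exact hN.2.1
        · rw [hB']; exact hN.2.2.1
        · rw [hC i hi2 hik]; exact hN.2.2.2 i hi2 hik
    · -- inf_of_gt
      intro σ m hgt hss hdle
      rw [mkFam_E, mkFam_E, mkE_of_carved n L c p i₀ hcar₀,
        mkE_of_carved n L c p i₀ (hdual_imp σ m hss.1 hdle), inf_bot_eq]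
  · -- saturated data
    refine ⟨fun ρ => -(pair n m₀ ρ), ?_, ?_, ?_⟩
    · -- thresholds
      intro ρ hρ w hwperp hw1 τ hτ i
      have hστ : SS n i₀ k ⊆ τ.1 := by rw [hτ]; exact Finset.subset_insert ρ _
      rw [mkFam_E, mkFam_E,
        jump_iff n L c p i₀ (m₀ := m₀) h3 hkn hj1 hjp hc hA hB' hC hστ hL1]
      have hpair : ∀ x : Fin (n+1), pair n (m₀ + i • w) x = pair n m₀ x + i * pair n w x :=
        fun x => by rw [pair_add, pair_smul]
      constructor
      · intro hJA
        have h2 := hJA.2 ρ (by rw [hτ]; exact Finset.mem_insert_self ρ _) hρ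
        rw [hpair, hw1] at h2
        show -(pair n m₀ ρ) ≤ i
        omega
      · intro hi
        have hi2 : -(pair n m₀ ρ) ≤ i := hi
        constructor
        · intro x hx
          rw [hpair, hwperp x hx, mul_zero, add_zero]
        · intro x hx hxS
          have hxρ : x = ρ := by
            rw [hτ] at hx
            rcases Finset.mem_insert.1 hx with h | h
            · exact h
            · exact absurd h hxS
          subst hxρ
          rw [hpair, hw1]
          omega
    · -- saturation
      intro σ hσ w hw m
      rw [mkFam_E, mkFam_E,
        jump_iff n L c p i₀ (m₀ := m₀) h3 hkn hj1 hjp hc hA hB' hC hσ hL1]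
      have hsum : ∀ x ∈ σ.1,
          pair n (∑ ρ ∈ σ.1 \ σ₀.1, (fun ρ => -(pair n m₀ ρ)) ρ • w ρ) x =
            if x ∈ σ.1 \ σ₀.1 then -(pair n m₀ x) else 0 := by
        intro x hx
        rw [pair_sum]
        by_cases hxs : x ∈ σ.1 \ σ₀.1
        · rw [if_pos hxs, Finset.sum_eq_single_of_mem x hxs]
          · rw [pair_smul, (hw x hxs).1, mul_one]
          · intro ρ hρs hρne
            rw [pair_smul, (hw ρ hρs).2 x hx (Ne.symm hρne), mul_zero]
        · rw [if_neg hxs]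
          refine Finset.sum_eq_zero fun ρ hρs => ?_
          have hρx : x ≠ ρ := fun h => hxs (h ▸ hρs)
          rw [pair_smul, (hw ρ hρs).2 x hx hρx, mul_zero]
      constructor
      · intro hJA
        constructor
        · intro x hx
          rw [pair_sub, hJA.1 x hx, sub_self]
        · refine (dualLe_iff n σ _ m).2 fun x hx => ?_
          rw [pair_add, hsum x hx]
          by_cases hxs : x ∈ σ.1 \ σ₀.1
          · rw [if_pos hxs]
            have h1 := hJA.2 x hx (Finset.mem_sdiff.1 hxs).2
            omega
          · rw [if_neg hxs]
            have hxS : x ∈ SS n i₀ k := by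
              by_contra hh
              exact hxs (Finset.mem_sdiff.2 ⟨hx, hh⟩)
            rw [hJA.1 x hxS]
            omega
      · rintro ⟨hperp, hdle⟩
        have hd := (dualLe_iff n σ _ m).1 hdle
        constructor
        · intro x hx
          have h1 := hperp x hx
          rw [pair_sub] at h1
          omega
        · intro x hx hxS
          have h1 := hd x hx
          rw [pair_add, hsum x hx, if_pos (Finset.mem_sdiff.2 ⟨hx, hxS⟩)] at h1
          omega
    · -- weight
      have hsum2 : ∑ ρ ∈ (σ₀.1)ᶜ, (pair n m₀ ρ + -(pair n m₀ ρ)) = 0 :=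
        Finset.sum_eq_zero fun ρ _ => by ring
      have hsplit : ∑ ρ ∈ σ₀.1, pair n m₀ ρ = -(c i₀ : ℤ) + T := by
        have e1 : ∑ ρ ∈ σ₀.1, pair n m₀ ρ
            = pair n m₀ i₀ + ∑ ρ ∈ (σ₀.1).erase i₀, pair n m₀ ρ :=
          (Finset.add_sum_erase _ _ hi₀m).symm
        have hr1e : ray n i₀ 1 ∈ (σ₀.1).erase i₀ := Finset.mem_erase.2 ⟨hr1ne, hr1m⟩
        have e2 : ∑ ρ ∈ (σ₀.1).erase i₀, pair n m₀ ρ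
            = pair n m₀ (ray n i₀ 1)
              + ∑ ρ ∈ ((σ₀.1).erase i₀).erase (ray n i₀ 1), pair n m₀ ρ :=
          (Finset.add_sum_erase _ _ hr1e).symm
        have e3 : ∑ ρ ∈ ((σ₀.1).erase i₀).erase (ray n i₀ 1), pair n m₀ ρ = 0 := by
          refine Finset.sum_eq_zero fun x hx => ?_
          have hx1 := Finset.mem_erase.1 hx
          have hx2 := Finset.mem_erase.1 hx1.2
          rcases SS_cases n i₀ h3 hkn hx2.2 with rfl | rfl | ⟨i, hi2, hik, rfl⟩
          · exact absurd rfl hx2.1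
          · exact absurd rfl hx1.1
          · exact hC i hi2 hik
        rw [e1, e2, e3, hA, hB]
        ring
      show -(c i₀ : ℤ) + (∑ i ∈ Finset.Ico 3 k, (p i : ℤ)) + ((j : ℤ) - 1) =
        (∑ ρ ∈ σ₀.1, pair n m₀ ρ) +
          (if σ₀.1.card = n then 0
            else ∑ ρ ∈ (σ₀.1)ᶜ, (pair n m₀ ρ + -(pair n m₀ ρ)))
      rw [hsplit, hsum2, hT]
      simp only [Pk]
      split <;> ring

end Assemble

/-- Proposition: existence of sequences of saturated elementary injections
with prescribed weights, starting from the normalized rank 2 reflexive family. -/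
theorem stmt5 (n : ℕ) (hn : 3 ≤ n)
    (L : Fin (n + 1) → Submodule ℂ (Fin 2 → ℂ))
    (hL1 : ∀ i, Module.finrank ℂ (L i) = 1)
    (hLd : ∀ i j, i ≠ j → L i ≠ L j)
    (c : Fin (n + 1) → ℕ) (i₀ : Fin (n + 1)) (hc : 1 ≤ c i₀) :
    (∃ 𝓔 : MultiFilt n (Fin 2 → ℂ), 𝓔.E = refSheaf n L c) ∧
    ∀ p : ℕ → ℕ, ∃ 𝓕 : ℕ → ℕ → MultiFilt n (Fin 2 → ℂ),
      (𝓕 3 0).E = refSheaf n L c ∧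
      (∀ k, 4 ≤ k → k ≤ n → 𝓕 k 0 = 𝓕 (k - 1) (p (k - 1))) ∧
      (∀ k, 3 ≤ k → k ≤ n → ∀ j, 1 ≤ j → j ≤ p k →
        ∃ (σ₀ : Cone n) (m₀ : Fin n → ℤ),
          IsSaturatedElementary (𝓕 k j) (𝓕 k (j - 1)) k σ₀ m₀
            (-(c i₀ : ℤ) + (∑ i ∈ Finset.Ico 3 k, (p i : ℤ)) + ((j : ℤ) - 1))) := by
  constructor
  · refine ⟨mkFam n L c (fun _ => 0) i₀ 3 0, ?_⟩
    funext σ m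
    exact mkE_of_not_carved n L c (fun _ => 0) i₀ (not_carved_30 n c (fun _ => 0) i₀)
  · intro p
    refine ⟨fun k j => mkFam n L c p i₀ k (min j (p k)), ?_, ?_, ?_⟩
    · funext σ m
      show mkE n L c p i₀ 3 (min 0 (p 3)) σ m = refSheaf n L c σ m
      rw [Nat.zero_min]
      exact mkE_of_not_carved n L c p i₀ (not_carved_30 n c p i₀)
    · intro k h4 hkn
      apply MultiFilt.ext'
      funext σ m
      show mkE n L c p i₀ k (min 0 (p k)) σ m = mkE n L c p i₀ (k-1) (min (p (k-1)) (p (k-1))) σ m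
      rw [Nat.zero_min, min_self]
      have hcc := carved_stage_eq n c p i₀ (σ := σ) (m := m) h4
      by_cases hx : Carved n c p i₀ k 0 σ m
      · rw [mkE_of_carved n L c p i₀ hx, mkE_of_carved n L c p i₀ (hcc.1 hx)]
      · rw [mkE_of_not_carved n L c p i₀ hx,
          mkE_of_not_carved n L c p i₀ (fun hy => hx (hcc.2 hy))]
    · intro k h3 hkn j hj1 hjp
      have e1 : min j (p k) = j := min_eq_left hjp
      have e2 : min (j-1) (p k) = j - 1 := min_eq_left (by omega)
      simp only [e1, e2]
      exact main_step n L c p i₀ hL1 hc h3 hkn hj1 hjp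

end Toric
end

section
/- Let n ≥ 1 and let R be a finite index set with |R| = n+1. Let b ∈ ℤ and c : R → ℤ, set a := b − Σ_{ρ∈R} c_ρ, and let s_k denote the k-th elementary symmetric function of the family (c_ρ)_{ρ∈R}. Then in ℤ[X] one has the congruence modulo X^{n+1}: ∏_{ρ∈R} (1 − (b − c_ρ)X) ≡ (1 − bX)^{n−1} · ( 1 − (a+b)X + (ab + s_2)X² + Σ_{k=3}^{n} ( Σ_{i=0}^{k−3} C(k−3,i) · s_{i+3} · b^{k−(i+3)} ) X^k ) (mod X^{n+1}). -/
open Finset Polynomial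

/-- The `k`-th elementary symmetric function of the family `(c ρ)_{ρ ∈ s}`. -/
def esym {ι : Type} (s : Finset ι) (k : ℕ) (c : ι → ℤ) : ℤ :=
  ∑ t ∈ Finset.powersetCard k s, ∏ ρ ∈ t, c ρ

noncomputable def Saux (b : ℤ) (d M : ℕ) : ℤ[X] :=
  ∑ m ∈ Finset.range (M+1), C (((m+d).choose m : ℤ) * b^m) * X^m

lemma Saux_step (b : ℤ) (d M : ℕ) :
    (1 - C b * X) * Saux b (d+1) M
      = Saux b d M - C (((M+1+d).choose M : ℤ) * b^(M+1)) * X^(M+1) := by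
  induction M with
  | zero => simp [Saux]
  | succ M ih =>
    have hS1 : Saux b (d+1) (M+1)
        = Saux b (d+1) M + C (((M+1+(d+1)).choose (M+1) : ℤ) * b^(M+1)) * X^(M+1) := by
      rw [Saux, Finset.sum_range_succ]; rfl
    have hS2 : Saux b d (M+1)
        = Saux b d M + C (((M+1+d).choose (M+1) : ℤ) * b^(M+1)) * X^(M+1) := by
      rw [Saux, Finset.sum_range_succ]; rfl
    have hp : (M+1+(d+1)).choose (M+1) = (M+1+d).choose M + (M+1+d).choose (M+1) := by
      have : M+1+(d+1) = (M+1+d) + 1 := by omega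
      rw [this, Nat.choose_succ_succ]
    have hp2 : (M+1+1+d).choose (M+1) = (M+1+(d+1)).choose (M+1) := by
      congr 1; omega
    rw [hS1, hS2, mul_add, ih, hp2, hp]
    push_cast
    simp only [map_add, map_mul, map_pow, map_natCast, map_one]
    ring

lemma Saux_key (b : ℤ) (d M : ℕ) :
    (X : ℤ[X]) ^ (M+1) ∣ (1 - C b * X) ^ (d+1) * Saux b d M - 1 := by
  induction d with
  | zero =>
    have hg := geom_sum_mul (C b * X) (M+1)
    have hS : Saux b 0 M = ∑ i ∈ Finset.range (M+1), (C b * X) ^ i := by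
      rw [Saux]
      refine Finset.sum_congr rfl fun m _ => ?_
      simp [mul_pow, ← C_pow]
    have : (1 - C b * X) ^ (0+1) * Saux b 0 M - 1 = -((C b * X) ^ (M+1)) := by
      rw [hS, pow_one]
      have : (1 - C b * X) * ∑ i ∈ Finset.range (M+1), (C b * X) ^ i
          = -((∑ i ∈ Finset.range (M+1), (C b * X) ^ i) * (C b * X - 1)) := by ring
      rw [this, hg]; ring
    rw [this]
    exact (dvd_neg).2 (by rw [mul_pow]; exact dvd_mul_left _ _)
  | succ d ih =>
    have hs := Saux_step b d M
    have heq : (1 - C b * X) ^ (d+1+1) * Saux b (d+1) M - 1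
        = ((1 - C b * X) ^ (d+1) * Saux b d M - 1)
          - (1 - C b * X) ^ (d+1) * (C (((M+1+d).choose M : ℤ) * b^(M+1)) * X^(M+1)) := by
      have : (1 - C b * X) ^ (d+1+1) * Saux b (d+1) M
          = (1 - C b * X) ^ (d+1) * ((1 - C b * X) * Saux b (d+1) M) := by ring
      rw [this, hs]; ring
    rw [heq]
    exact dvd_sub ih ((dvd_mul_left _ _).mul_left _)

lemma esym_zero {ι : Type} (s : Finset ι) (c : ι → ℤ) : esym s 0 c = 1 := by
  simp [esym, Finset.powersetCard_zero]

lemma esym_one {ι : Type} (s : Finset ι) (c : ι → ℤ) : esym s 1 c = ∑ ρ ∈ s, c ρ := by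
  simp [esym, Finset.powersetCard_one, Finset.sum_map]

lemma prod_eq {R : Type} [Fintype R] (b : ℤ) (c : R → ℤ) :
    ∏ ρ, (1 - C (b - c ρ) * X)
      = ∑ j ∈ Finset.range (Fintype.card R + 1),
          C (esym Finset.univ j c) * X ^ j * (1 - C b * X) ^ (Fintype.card R - j) := by
  classical
  have h1 : ∀ ρ : R, (1 : ℤ[X]) - C (b - c ρ) * X = C (c ρ) * X + (1 - C b * X) := by
    intro ρ; rw [map_sub]; ring
  simp_rw [h1]
  rw [Finset.prod_add, Finset.powerset_card_disjiUnion]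
  refine (Finset.sum_disjiUnion _ _ _).trans ?_
  rw [Finset.card_univ]
  refine Finset.sum_congr rfl fun j hj => ?_
  rw [esym, map_sum, Finset.sum_mul, Finset.sum_mul]
  refine Finset.sum_congr rfl fun t ht => ?_
  obtain ⟨hts, htc⟩ := Finset.mem_powersetCard.1 ht
  rw [Finset.prod_mul_distrib, Finset.prod_const, ← map_prod, htc,
    Finset.prod_const, Finset.card_sdiff_of_subset hts, htc, Finset.card_univ]

lemma swap_sum {R : Type} [Fintype R] (n : ℕ) (b : ℤ) (c : R → ℤ) :
    ∑ k ∈ Finset.Icc 3 n,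
        C (∑ i ∈ Finset.range (k - 2),
            ((k - 3).choose i : ℤ) * esym Finset.univ (i + 3) c * b ^ (k - (i + 3))) * X ^ k
      = ∑ j ∈ Finset.Icc 3 n, C (esym Finset.univ j c) * X ^ j * Saux b (j - 3) (n - j) := by
  simp_rw [map_sum, Finset.sum_mul, Saux, Finset.mul_sum]
  rw [Finset.sum_sigma', Finset.sum_sigma']
  refine Finset.sum_nbij' (fun p => ⟨p.2 + 3, p.1 - p.2 - 3⟩) (fun q => ⟨q.1 + q.2, q.1 - 3⟩)
    ?_ ?_ ?_ ?_ ?_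
  · rintro ⟨k, i⟩ hp
    simp only [Finset.mem_sigma, Finset.mem_Icc, Finset.mem_range] at hp ⊢
    omega
  · rintro ⟨j, m⟩ hq
    simp only [Finset.mem_sigma, Finset.mem_Icc, Finset.mem_range] at hq ⊢
    omega
  · rintro ⟨k, i⟩ hp
    simp only [Finset.mem_sigma, Finset.mem_Icc, Finset.mem_range] at hp
    simp only [Sigma.mk.inj_iff, heq_eq_eq]
    constructor <;> omega
  · rintro ⟨j, m⟩ hq
    simp only [Finset.mem_sigma, Finset.mem_Icc, Finset.mem_range] at hq
    simp only [Sigma.mk.inj_iff, heq_eq_eq]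
    constructor <;> omega
  · rintro ⟨k, i⟩ hp
    simp only [Finset.mem_sigma, Finset.mem_Icc, Finset.mem_range] at hp
    obtain ⟨⟨h3k, hkn⟩, hik⟩ := hp
    have h1 : i + 3 + 3 - 3 = i + 3 - 3 + 3 := by omega
    have h2 : k - (i + 3) + (i + 3 - 3) = k - 3 := by omega
    have h3 : (k - 3).choose (k - (i+3)) = (k - 3).choose i := by
      have hik3 : i ≤ k - 3 := by omega
      have : k - (i + 3) = (k - 3) - i := by omega
      rw [this, Nat.choose_symm hik3]
    have h4 : k - i - 3 = k - (i + 3) := by omega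
    simp only [h4]
    rw [show i + 3 - 3 = i from by omega] at *
    rw [h2, h3]
    have hX : (X : ℤ[X]) ^ (i + 3) * X ^ (k - (i + 3)) = X ^ k := by
      rw [← pow_add]; congr 1; omega
    simp only [map_mul]
    rw [← hX]
    ring


/-- total Chern class of a rank 2 toric sheaf on `ℙⁿ`, coefficient form:
modulo `X^{n+1}`, `∏_ρ (1 - (b - c_ρ)X)` equals `(1 - bX)^{n-1}` times
`1 - (a+b)X + (ab + s₂)X² + Σ_{k=3}^n (Σ_{i=0}^{k-3} C(k-3,i) s_{i+3} b^{k-(i+3)}) X^k`,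
where `a = b - Σ_ρ c_ρ` and `s_j` is the `j`-th elementary symmetric function of the `c_ρ`. -/
theorem stmt6 (n : ℕ) (hn : 1 ≤ n) (R : Type) [Fintype R] (hR : Fintype.card R = n + 1)
    (b : ℤ) (c : R → ℤ) (a : ℤ) (ha : a = b - ∑ ρ, c ρ) :
    (X : ℤ[X]) ^ (n + 1) ∣
      (∏ ρ, (1 - C (b - c ρ) * X)
        - (1 - C b * X) ^ (n - 1) *
          (1 - C (a + b) * X + C (a * b + esym Finset.univ 2 c) * X ^ 2
            + ∑ k ∈ Finset.Icc 3 n,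
                C (∑ i ∈ Finset.range (k - 2),
                    ((k - 3).choose i : ℤ) * esym Finset.univ (i + 3) c * b ^ (k - (i + 3)))
                  * X ^ k)) := by
  subst ha
  rw [prod_eq b c, hR, swap_sum n b c]
  rcases Nat.lt_or_ge n 2 with hlt | h2'
  · have hn1 : n = 1 := by omega
    subst hn1
    rw [show Finset.Icc 3 1 = ∅ from rfl, Finset.sum_empty, add_zero]
    simp only [Finset.sum_range_succ, Finset.sum_range_zero]
    convert dvd_zero ((X : ℤ[X]) ^ (1 + 1)) using 1
    rw [esym_zero, esym_one]
    simp only [map_add, map_sub, map_mul, map_one, pow_zero, pow_one, zero_add]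
    ring
  have h1 : (3:ℕ) ≤ n + 1 + 1 := by omega
  have h2 : (3:ℕ) ≤ n + 1 := by omega
  rw [Finset.range_eq_Ico, ← Finset.sum_Ico_consecutive _ (Nat.zero_le 3) h1,
    Finset.sum_Ico_succ_top h2,
    show Finset.Ico 0 3 = Finset.Icc 0 2 from Finset.Ico_add_one_right_eq_Icc 0 2,
    show Finset.Icc 0 2 = {0, 1, 2} from rfl]
  rw [Finset.sum_insert (by decide), Finset.sum_insert (by decide), Finset.sum_singleton]
  rw [show Finset.Ico 3 (n+1) = Finset.Icc 3 n from Finset.Ico_add_one_right_eq_Icc 3 n]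
  have hQ0 : C (esym Finset.univ 0 c) * X ^ 0 * (1 - C b * X) ^ (n + 1 - 0) +
      (C (esym Finset.univ 1 c) * X ^ 1 * (1 - C b * X) ^ (n + 1 - 1) +
       C (esym Finset.univ 2 c) * X ^ 2 * (1 - C b * X) ^ (n + 1 - 2)) =
      (1 - C b * X) ^ (n - 1) *
        (1 - C (b - (∑ ρ, c ρ) + b) * X + C ((b - ∑ ρ, c ρ) * b + esym Finset.univ 2 c) * X ^ 2) := by
    rw [esym_zero, esym_one,
        show n + 1 - 0 = (n-1) + 2 from by omega, show n + 1 - 1 = (n-1) + 1 from by omega,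
        show n + 1 - 2 = n - 1 from by omega, pow_add, pow_add]
    simp only [map_add, map_sub, map_mul, map_one]
    ring
  have htop : (X:ℤ[X])^(n+1) ∣ C (esym Finset.univ (n+1) c) * X ^ (n+1) * (1 - C b * X) ^ (n+1-(n+1)) :=
    ⟨C (esym Finset.univ (n+1) c) * (1 - C b * X) ^ (n+1-(n+1)), by ring⟩
  have hmid : (X:ℤ[X])^(n+1) ∣ ∑ j ∈ Finset.Icc 3 n,
      (C (esym Finset.univ j c) * X ^ j * (1 - C b * X) ^ (n+1-j)
        - (1 - C b * X) ^ (n-1) * (C (esym Finset.univ j c) * X ^ j * Saux b (j-3) (n-j))) := by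
    refine Finset.dvd_sum fun j hj => ?_
    obtain ⟨h3j, hjn⟩ := Finset.mem_Icc.1 hj
    have hd := Saux_key b (j-3) (n-j)
    have hXs : (X:ℤ[X])^(n+1) = X^j * X^((n-j)+1) := by rw [← pow_add]; congr 1; omega
    have hP : ((1:ℤ[X]) - C b * X)^(n-1) = (1 - C b * X)^(n+1-j) * (1 - C b * X)^((j-3)+1) := by
      rw [← pow_add]; congr 1; omega
    have heq : C (esym Finset.univ j c) * X ^ j * (1 - C b * X) ^ (n+1-j)
        - (1 - C b * X) ^ (n-1) * (C (esym Finset.univ j c) * X ^ j * Saux b (j-3) (n-j))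
        = -((C (esym Finset.univ j c) * X ^ j * (1 - C b * X) ^ (n+1-j)) *
            ((1 - C b * X)^((j-3)+1) * Saux b (j-3) (n-j) - 1)) := by
      rw [hP]; ring
    rw [heq, hXs]
    exact dvd_neg.2 (mul_dvd_mul ⟨C (esym Finset.univ j c) * (1 - C b * X)^(n+1-j), by ring⟩ hd)
  have := dvd_add hmid htop
  rw [Finset.sum_sub_distrib, ← Finset.mul_sum] at this
  convert this using 1
  linear_combination hQ0
end

section
/- Let n ≥ 1 and let R be a finite index set with |R| = n+1. Let c : R → ℕ, set b := Σ_{ρ∈R} c_ρ, and let γ_0, γ_1, …, γ_n be the unique integers (with γ_0 = 1) such that ∏_{ρ∈R} (1 − (b − c_ρ)X) ≡ (1 − bX)^{n−1} · (Σ_{k=0}^{n} γ_k X^k) modulo X^{n+1} in ℤ[X]. Then for every k with 3 ≤ k ≤ n: Σ_{i=0}^{k−3} C(k−3,i) · γ_{i+3} · γ_1^{k−i−3} ≥ 0; in fact this sum equals the k-th elementary symmetric function of the family (c_ρ)_{ρ∈R}. -/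
open Finset Polynomial

/-- Truncated expansion of `(1 - bX)^{-r}` up to degree `n`. -/
noncomputable def Wp (b : ℤ) (n r : ℕ) : ℤ[X] :=
  ∑ d ∈ Finset.range (n+1), C (((d + r - 1).choose d : ℤ) * b ^ d) * X ^ d

/-- `(1 - bX)^{2-m}`, interpreted via `Wp` for `m ≥ 3`. -/
noncomputable def Up (b : ℤ) (n m : ℕ) : ℤ[X] :=
  if m ≤ 2 then (1 - C b * X)^(2-m) else Wp b n (m-2)

lemma coeff_W (b : ℤ) (n r d : ℕ) (hd : d ≤ n) :
    (Wp b n r).coeff d = ((d + r - 1).choose d : ℤ) * b ^ d := by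
  rw [Wp, finset_sum_coeff]
  rw [Finset.sum_eq_single d]
  · rw [coeff_C_mul, coeff_X_pow]
    simp
  · intro e he hne
    rw [coeff_C_mul, coeff_X_pow]
    simp [hne.symm]
  · intro h
    exact absurd (Finset.mem_range.2 (Nat.lt_succ_of_le hd)) h

lemma W_step (b : ℤ) (n r : ℕ) :
    (X : ℤ[X])^(n+1) ∣ (1 - C b * X) * Wp b n (r+1) - Wp b n r := by
  rw [X_pow_dvd_iff]
  intro d hd
  have hd' : d ≤ n := Nat.lt_succ_iff.1 hd
  have h1 : ((1 - C b * X) * Wp b n (r+1)) = Wp b n (r+1) - C b * (X * Wp b n (r+1)) := by ring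
  rw [coeff_sub, h1, coeff_sub, coeff_C_mul]
  cases d with
  | zero =>
    simp [coeff_W b n _ 0 (Nat.zero_le n)]
  | succ e =>
    rw [coeff_X_mul, coeff_W b n (r+1) (e+1) hd', coeff_W b n (r+1) e (le_trans (Nat.le_succ e) hd'),
      coeff_W b n r (e+1) hd']
    have h2 : e + 1 + (r+1) - 1 = (e + r) + 1 := by omega
    have h3 : e + (r+1) - 1 = e + r := by omega
    have h4 : e + 1 + r - 1 = e + r := by omega
    rw [h2, h3, h4, Nat.choose_succ_succ (e + r) e]
    push_cast
    ring

lemma W_inv (b : ℤ) (n : ℕ) : ∀ r, (X : ℤ[X])^(n+1) ∣ (1 - C b * X)^r * Wp b n r - 1 := by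
  intro r
  induction r with
  | zero =>
    have h : Wp b n 0 = 1 := by
      rw [Wp]
      rw [Finset.sum_eq_single 0]
      · simp
      · intro e he hne
        have h0 : (e + 0 - 1).choose e = 0 := Nat.choose_eq_zero_of_lt (by omega)
        rw [h0]
        simp
      · simp
    simp [h]
  | succ r ih =>
    have key : (1 - C b * X)^(r+1) * Wp b n (r+1) - 1 =
        (1 - C b * X)^r * ((1 - C b * X) * Wp b n (r+1) - Wp b n r)
        + ((1 - C b * X)^r * Wp b n r - 1) := by ring
    rw [key]
    exact dvd_add ((W_step b n r).mul_left _) ih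

lemma coeff_pow_lin (b : ℤ) (e d : ℕ) (h : e < d) : ((1 - C b * X)^e).coeff d = 0 := by
  apply coeff_eq_zero_of_natDegree_lt
  refine lt_of_le_of_lt (natDegree_pow_le.trans ?_) h
  have h1 : (1 - C b * X).natDegree ≤ 1 := by
    refine (natDegree_sub_le _ _).trans ?_
    simp only [natDegree_one]
    have : (C b * X).natDegree ≤ 1 := (natDegree_C_mul_le b X).trans (by simp)
    omega
  calc e * (1 - C b * X).natDegree ≤ e * 1 := Nat.mul_le_mul_left e h1
    _ = e := by omega

lemma U_cong (b : ℤ) {n : ℕ} (hn : 1 ≤ n) {m : ℕ} (hm : m ≤ n+1) :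
    (X : ℤ[X])^(n+1) ∣ (1 - C b * X)^(n-1) * Up b n m - (1 - C b * X)^(n+1-m) := by
  by_cases h : m ≤ 2
  · rw [Up, if_pos h, ← pow_add]
    have he : n - 1 + (2 - m) = n + 1 - m := by omega
    rw [he, sub_self]
    exact dvd_zero _
  · rw [Up, if_neg h]
    have h1 : (1 - C b * X)^(n-1) = (1 - C b * X)^(n+1-m) * (1 - C b * X)^(m-2) := by
      rw [← pow_add]; congr 1; omega
    have h2 : (1 - C b * X)^(n+1-m) * (1 - C b * X)^(m-2) * Wp b n (m-2)
        - (1 - C b * X)^(n+1-m)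
        = (1 - C b * X)^(n+1-m) * ((1 - C b * X)^(m-2) * Wp b n (m-2) - 1) := by ring
    rw [h1, h2]
    exact (W_inv b n (m-2)).mul_left _

lemma coeff_term (a : ℤ) (P : ℤ[X]) (m j : ℕ) :
    (C a * X ^ m * P).coeff j = if m ≤ j then a * P.coeff (j - m) else 0 := by
  rw [mul_right_comm, coeff_mul_X_pow']
  split_ifs <;> simp [coeff_C_mul]

lemma inner_id (b : ℤ) (N t : ℕ) (ht : t ≤ N) :
    ∑ i ∈ Finset.range (N+1), ((N.choose i : ℤ) * (i.choose t : ℤ) * b^(i-t) * (-b)^(N-i))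
      = if t = N then 1 else 0 := by
  have hsub : Finset.Ico t (N+1) ⊆ Finset.range (N+1) := by
    intro x hx; simp only [Finset.mem_Ico, Finset.mem_range] at *; omega
  rw [← Finset.sum_subset hsub (by
    intro i _ hi
    simp only [Finset.mem_Ico, Finset.mem_range] at *
    have : i < t := by omega
    rw [Nat.choose_eq_zero_of_lt this]
    simp)]
  rw [Finset.sum_Ico_eq_sum_range]
  have hM : N + 1 - t = (N - t) + 1 := by omega
  rw [hM]
  have hterm : ∀ j ∈ Finset.range ((N-t)+1),
      ((N.choose (t+j) : ℤ) * ((t+j).choose t : ℤ) * b^((t+j)-t) * (-b)^(N-(t+j)))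
      = (N.choose t : ℤ) * (b^j * (-b)^((N-t)-j) * ((N-t).choose j : ℤ)) := by
    intro j hj
    simp only [Finset.mem_range] at hj
    have h1 : N.choose (t+j) * (t+j).choose t = N.choose t * (N-t).choose j := by
      have := Nat.choose_mul (n := N) (k := t+j) (s := t) (by omega)
      simpa using this
    have h2 : (t+j)-t = j := by omega
    have h3 : N-(t+j) = (N-t)-j := by omega
    rw [h2, h3]
    have h1' : ((N.choose (t+j) : ℤ)) * ((t+j).choose t : ℤ)
        = (N.choose t : ℤ) * ((N-t).choose j : ℤ) := by exact_mod_cast h1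
    linear_combination (b ^ j * b ^ (N - t - j) * (-1) ^ (N - t - j)) * h1'
  rw [Finset.sum_congr rfl hterm, ← Finset.mul_sum, ← add_pow b (-b) (N-t)]
  have h0 : b + -b = 0 := by ring
  rw [h0]
  rcases Nat.eq_or_lt_of_le ht with h | h
  · subst h
    simp
  · rw [zero_pow (by omega : N - t ≠ 0), if_neg (by omega), mul_zero]

lemma prodA (R : Type) [Fintype R] (n : ℕ) (hR : Fintype.card R = n+1) (c : R → ℕ) (b : ℤ) :
    ∏ ρ : R, (1 - C (b - (c ρ : ℤ)) * X) =
    ∑ m ∈ Finset.range (n+2), C (esym Finset.univ m (fun ρ => (c ρ : ℤ))) * X ^ m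
      * (1 - C b * X)^(n+1-m) := by
  have h1 : ∀ ρ : R, 1 - C (b - (c ρ : ℤ)) * X = C ((c ρ : ℤ)) * X + (1 - C b * X) := by
    intro ρ; rw [C_sub]; ring
  classical
  calc ∏ ρ : R, (1 - C (b - (c ρ : ℤ)) * X)
      = ∏ ρ : R, (C ((c ρ : ℤ)) * X + (1 - C b * X)) :=
        Finset.prod_congr rfl (fun ρ _ => h1 ρ)
    _ = ∑ t ∈ Finset.univ.powerset, (∏ ρ ∈ t, (C ((c ρ : ℤ)) * X))
          * ∏ _ρ ∈ Finset.univ \ t, (1 - C b * X) := Finset.prod_add _ _ _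
    _ = ∑ t ∈ Finset.univ.powerset,
          C (∏ ρ ∈ t, (c ρ : ℤ)) * X ^ t.card * (1 - C b * X)^(n+1 - t.card) := by
        refine Finset.sum_congr rfl fun t _ => ?_
        rw [Finset.prod_const, Finset.prod_mul_distrib, Finset.prod_const, map_prod,
          Finset.card_sdiff_of_subset (Finset.subset_univ t), Finset.card_univ, hR]
    _ = ∑ m ∈ Finset.range (n+2), ∑ t ∈ Finset.powersetCard m Finset.univ,
          C (∏ ρ ∈ t, (c ρ : ℤ)) * X ^ t.card * (1 - C b * X)^(n+1 - t.card) := by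
        rw [Finset.sum_powerset, Finset.card_univ, hR]
    _ = _ := by
        refine Finset.sum_congr rfl fun m _ => ?_
        rw [esym, map_sum, Finset.sum_mul, Finset.sum_mul]
        refine Finset.sum_congr rfl fun t ht => ?_
        rw [(Finset.mem_powersetCard.1 ht).2]

/-- Lemma 3.8, coefficient form: if `γ_0 = 1, γ_1, …, γ_n` are the integers
with `∏_ρ (1 - (b - c_ρ)X) ≡ (1 - bX)^{n-1}·(Σ_k γ_k X^k)` modulo `X^{n+1}`, where
`c : R → ℕ` and `b = Σ c_ρ`, then for `3 ≤ k ≤ n` the sum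
`Σ_{i=0}^{k-3} C(k-3,i) γ_{i+3} γ_1^{k-i-3}` is nonnegative; in fact it equals the `k`-th
elementary symmetric function of the `c_ρ`. -/
theorem stmt7 (n : ℕ) (hn : 1 ≤ n) (R : Type) [Fintype R] (hR : Fintype.card R = n + 1)
    (c : R → ℕ) (b : ℤ) (hb : b = ∑ ρ, (c ρ : ℤ)) (γ : ℕ → ℤ) (hγ0 : γ 0 = 1)
    (hcong : (X : ℤ[X]) ^ (n + 1) ∣
      (∏ ρ, (1 - C (b - (c ρ : ℤ)) * X)
        - (1 - C b * X) ^ (n - 1) * ∑ k ∈ Finset.range (n + 1), C (γ k) * X ^ k))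
    (k : ℕ) (hk3 : 3 ≤ k) (hkn : k ≤ n) :
    0 ≤ ∑ i ∈ Finset.range (k - 2), ((k - 3).choose i : ℤ) * γ (i + 3) * γ 1 ^ (k - i - 3) ∧
    ∑ i ∈ Finset.range (k - 2), ((k - 3).choose i : ℤ) * γ (i + 3) * γ 1 ^ (k - i - 3)
      = esym Finset.univ k (fun ρ => (c ρ : ℤ)) := by
  set c' : R → ℤ := fun ρ => (c ρ : ℤ) with hc'
  set S : ℕ → ℤ := fun m => esym Finset.univ m c' with hS
  set G : ℤ[X] := ∑ j ∈ Finset.range (n + 1), C (γ j) * X ^ j with hG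
  set Dp : ℤ[X] := ∑ m ∈ Finset.range (n+2), C (S m) * X ^ m * Up b n m with hDp
  -- the product is congruent to (1-bX)^{n-1} Dp
  have hPD : (X : ℤ[X])^(n+1) ∣ (∏ ρ, (1 - C (b - (c ρ : ℤ)) * X)) - (1 - C b * X)^(n-1) * Dp := by
    rw [prodA R n hR c b, hDp, Finset.mul_sum, ← Finset.sum_sub_distrib]
    refine Finset.dvd_sum fun m hm => ?_
    have hm' : m ≤ n + 1 := by
      have := Finset.mem_range.1 hm; omega
    have h := U_cong b hn hm'
    have heq : C (esym Finset.univ m c') * X ^ m * (1 - C b * X)^(n+1-m)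
        - (1 - C b * X)^(n-1) * (C (S m) * X ^ m * Up b n m)
        = (C (S m) * X ^ m) * -((1 - C b * X)^(n-1) * Up b n m - (1 - C b * X)^(n+1-m)) := by
      rw [hS]; ring
    rw [heq]
    exact ((dvd_neg.mpr h)).mul_left _
  have hAGD : (X : ℤ[X])^(n+1) ∣ (1 - C b * X)^(n-1) * (G - Dp) := by
    have h2 := dvd_sub hcong hPD
    have heq : ((∏ ρ, (1 - C (b - (c ρ : ℤ)) * X))
          - (1 - C b * X) ^ (n - 1) * ∑ j ∈ Finset.range (n + 1), C (γ j) * X ^ j)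
        - ((∏ ρ, (1 - C (b - (c ρ : ℤ)) * X)) - (1 - C b * X)^(n-1) * Dp)
        = (1 - C b * X)^(n-1) * (Dp - G) := by rw [hG]; ring
    rw [heq] at h2
    have heq2 : (1 - C b * X)^(n-1) * (G - Dp) = -((1 - C b * X)^(n-1) * (Dp - G)) := by ring
    rw [heq2]
    exact dvd_neg.mpr h2
  have hGD : (X : ℤ[X])^(n+1) ∣ (G - Dp) := by
    have hW := W_inv b n (n-1)
    have heq : G - Dp = ((1 - C b * X)^(n-1) * (G - Dp)) * Wp b n (n-1)
        - ((1 - C b * X)^(n-1) * Wp b n (n-1) - 1) * (G - Dp) := by ring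
    rw [heq]
    exact dvd_sub (hAGD.mul_right _) (hW.mul_right _)
  -- coefficient extraction
  have hcoeff : ∀ j, j ≤ n → γ j = Dp.coeff j := by
    intro j hj
    have h0 : (G - Dp).coeff j = 0 := X_pow_dvd_iff.1 hGD j (by omega)
    have hGc : G.coeff j = γ j := by
      rw [hG, finset_sum_coeff, Finset.sum_eq_single j]
      · rw [coeff_C_mul, coeff_X_pow]; simp
      · intro e he hne
        rw [coeff_C_mul, coeff_X_pow]; simp [hne.symm]
      · intro h
        exact absurd (Finset.mem_range.2 (by omega)) h
    rw [coeff_sub, hGc] at h0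
    linarith
  have hDpcoeff : ∀ j, Dp.coeff j
      = ∑ m ∈ Finset.range (n+2), (if m ≤ j then S m * (Up b n m).coeff (j-m) else 0) := by
    intro j
    rw [hDp, finset_sum_coeff]
    exact Finset.sum_congr rfl fun m _ => coeff_term _ _ _ _
  -- value of γ 1
  have hS0 : S 0 = 1 := by
    show esym Finset.univ 0 c' = 1
    simp [esym]
  have hS1 : S 1 = b := by
    show esym Finset.univ 1 c' = b
    rw [esym, Finset.powersetCard_one, Finset.sum_map, hb]
    simp [hc']
  have hsq : (1 - C b * X)^2 = 1 - C (2*b) * X + C (b*b) * X^2 := by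
    rw [C_mul, C_mul, map_ofNat]
    ring
  have hγ1 : γ 1 = -b := by
    rw [hcoeff 1 hn, hDpcoeff 1]
    have hsub : Finset.range 2 ⊆ Finset.range (n+2) := by
      intro x hx; simp only [Finset.mem_range] at *; omega
    rw [← Finset.sum_subset hsub (by
      intro m _ hm
      simp only [Finset.mem_range] at hm
      rw [if_neg (by omega)])]
    rw [Finset.sum_range_succ, Finset.sum_range_one, if_pos (by omega), if_pos (by omega)]
    have hU0 : Up b n 0 = (1 - C b * X)^2 := by rw [Up, if_pos (by omega)]
    have hU1 : Up b n 1 = (1 - C b * X)^1 := by rw [Up, if_pos (by omega)]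
    rw [hU0, hU1, hsq, hS0, hS1, pow_one]
    have hz : (C (b*b) * X^2).coeff 1 = 0 := by
      rw [coeff_C_mul, coeff_X_pow]; simp
    rw [coeff_add, coeff_sub, hz, coeff_C_mul]
    simp [coeff_one]
    ring
  -- formula for γ (i+3)
  have hγf : ∀ i, i + 3 ≤ n → γ (i+3)
      = ∑ t ∈ Finset.range (i+1), S (t+3) * ((i).choose t : ℤ) * b^(i-t) := by
    intro i hi
    rw [hcoeff (i+3) hi, hDpcoeff (i+3)]
    have hsub : Finset.Ico 3 (i+3+1) ⊆ Finset.range (n+2) := by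
      intro x hx; simp only [Finset.mem_Ico, Finset.mem_range] at *; omega
    rw [← Finset.sum_subset hsub (by
      intro m hm hm2
      simp only [Finset.mem_Ico, Finset.mem_range] at hm hm2
      by_cases hmj : m ≤ i + 3
      · have hm2' : m ≤ 2 := by omega
        rw [if_pos hmj, Up, if_pos hm2']
        rw [coeff_pow_lin b (2-m) (i+3-m) (by omega)]
        simp
      · rw [if_neg hmj])]
    have hstep : ∀ m ∈ Finset.Ico 3 (i+3+1),
        (if m ≤ i+3 then S m * (Up b n m).coeff (i+3-m) else 0)
        = S m * (((i).choose (i+3-m) : ℤ) * b^(i+3-m)) := by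
      intro m hm
      simp only [Finset.mem_Ico] at hm
      rw [if_pos (by omega), Up, if_neg (by omega),
        coeff_W b n (m-2) (i+3-m) (by omega)]
      have he : i+3-m + (m-2) - 1 = i := by omega
      rw [he]
    rw [Finset.sum_congr rfl hstep, Finset.sum_Ico_eq_sum_range]
    have hr : i + 3 + 1 - 3 = i + 1 := by omega
    rw [hr]
    refine Finset.sum_congr rfl fun t ht => ?_
    simp only [Finset.mem_range] at ht
    have h1 : i + 3 - (3 + t) = i - t := by omega
    have h2 : i.choose (i - t) = i.choose t := Nat.choose_symm (by omega)
    rw [h1, h2, add_comm 3 t]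
    ring
  -- the main computation
  have hmain : ∑ i ∈ Finset.range (k - 2), ((k - 3).choose i : ℤ) * γ (i + 3) * γ 1 ^ (k - i - 3)
      = S k := by
    set N : ℕ := k - 3 with hN
    have hr2 : k - 2 = N + 1 := by omega
    rw [hr2]
    have hstep1 : ∀ i ∈ Finset.range (N+1),
        ((N.choose i : ℤ)) * γ (i + 3) * γ 1 ^ (k - i - 3)
        = ∑ t ∈ Finset.range (N+1),
            S (t+3) * ((N.choose i : ℤ) * (i.choose t : ℤ) * b^(i-t) * (-b)^(N-i)) := by
      intro i hi
      simp only [Finset.mem_range] at hi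
      have hki : k - i - 3 = N - i := by omega
      rw [hki, hγ1, hγf i (by omega)]
      have hsub2 : Finset.range (i+1) ⊆ Finset.range (N+1) := by
        intro x hx; simp only [Finset.mem_range] at *; omega
      rw [Finset.mul_sum, Finset.sum_mul]
      rw [← Finset.sum_subset hsub2 (by
        intro t _ ht
        simp only [Finset.mem_range] at ht
        rw [Nat.choose_eq_zero_of_lt (by omega : i < t)]
        push_cast
        ring)]
      refine Finset.sum_congr rfl fun t _ => ?_
      ring
    rw [Finset.sum_congr rfl hstep1, Finset.sum_comm]
    have hstep2 : ∀ t ∈ Finset.range (N+1),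
        (∑ i ∈ Finset.range (N+1),
          S (t+3) * ((N.choose i : ℤ) * (i.choose t : ℤ) * b^(i-t) * (-b)^(N-i)))
        = (if t = N then S (t+3) else 0) := by
      intro t ht
      simp only [Finset.mem_range] at ht
      rw [← Finset.mul_sum, inner_id b N t (by omega)]
      split_ifs <;> simp
    rw [Finset.sum_congr rfl hstep2, Finset.sum_ite_eq' (Finset.range (N+1)) N (fun t => S (t+3)),
      if_pos (Finset.mem_range.2 (by omega))]
    congr 1
    omega
  refine ⟨?_, hmain⟩
  rw [hmain, hS]
  exact Finset.sum_nonneg fun t _ => Finset.prod_nonneg fun ρ _ => Int.natCast_nonneg _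
end

section
/- Let I be a finite set, let Λ be any type, let c : I → ℕ and L : I → Λ. Assume that for every λ ∈ Λ one has Σ_{i∈I, L(i)=λ} c_i ≤ Σ_{i∈I, L(i)≠λ} c_i. Then 2 · Σ_{i∈I} c_i² ≤ (Σ_{i∈I} c_i)². Equivalently, setting c₁ := Σ_{i∈I} c_i and c₂ := Σ_{{i,j}⊆I, i≠j} c_i c_j (sum over unordered pairs), one has 4c₂ − c₁² ≥ 0. -/
open Finset

lemma aux_sq_sum {I : Type} [DecidableEq I] (f : I → ℤ) (s : Finset I) :
    (∑ i ∈ s, f i) ^ 2 = ∑ i ∈ s, (f i) ^ 2 + 2 * ∑ t ∈ s.powersetCard 2, ∏ i ∈ t, f i := by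
  induction s using Finset.induction with
  | empty =>
    rw [show Finset.powersetCard 2 (∅ : Finset I) = ∅ from
      Finset.powersetCard_eq_empty.mpr (by simp)]
    simp
  | @insert a s ha ih =>
    have hdisj : Disjoint (s.powersetCard 2) ((s.powersetCard 1).image (insert a)) := by
      rw [Finset.disjoint_left]
      intro t ht ht'
      simp only [mem_image] at ht'
      obtain ⟨u, hu, rfl⟩ := ht'
      have := (mem_powersetCard.mp ht).1
      exact ha (this (mem_insert_self a u))
    have hinj : ∀ x ∈ s.powersetCard 1, ∀ y ∈ s.powersetCard 1,
        insert a x = insert a y → x = y := by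
      intro x hx y hy hxy
      have hax : a ∉ x := fun h => ha ((mem_powersetCard.mp hx).1 h)
      have hay : a ∉ y := fun h => ha ((mem_powersetCard.mp hy).1 h)
      ext i
      constructor
      · intro hi
        have : i ∈ insert a y := hxy ▸ mem_insert_of_mem hi
        rcases mem_insert.mp this with rfl | h
        · exact absurd hi hax
        · exact h
      · intro hi
        have : i ∈ insert a x := hxy ▸ mem_insert_of_mem hi
        rcases mem_insert.mp this with rfl | h
        · exact absurd hi hay
        · exact h
    have himg : ∑ t ∈ (s.powersetCard 1).image (insert a), ∏ i ∈ t, f i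
        = f a * ∑ i ∈ s, f i := by
      rw [sum_image hinj, powersetCard_one, sum_map, mul_sum]
      refine sum_congr rfl fun i hi => ?_
      have hai : a ∉ ({i} : Finset I) := by
        simp only [mem_singleton]; rintro rfl; exact ha hi
      simp [prod_insert hai]
    rw [sum_insert ha, sum_insert ha, powersetCard_succ_insert ha, sum_union hdisj, himg]
    linear_combination ih

/-- Bogomolov–Gieseker inequality, combinatorial form: if for every `λ`
the sum of the `c_i` with `L i = λ` is at most the sum of those with `L i ≠ λ`, then
`2·Σ cᵢ² ≤ (Σ cᵢ)²`; equivalently, `4c₂ - c₁² ≥ 0` where `c₁ = Σ cᵢ` and `c₂` is the sum of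
the products `cᵢcⱼ` over unordered pairs `i ≠ j`. -/
theorem stmt8 (I : Type) [Fintype I] (Λ : Type) [DecidableEq Λ] (c : I → ℕ) (L : I → Λ)
    (h : ∀ lam : Λ, ∑ i ∈ Finset.univ.filter (fun i => L i = lam), c i ≤
      ∑ i ∈ Finset.univ.filter (fun i => L i ≠ lam), c i) :
    2 * ∑ i, c i ^ 2 ≤ (∑ i, c i) ^ 2 ∧
    0 ≤ 4 * (∑ t ∈ Finset.powersetCard 2 (Finset.univ : Finset I), ∏ i ∈ t, (c i : ℤ))
      - (∑ i, (c i : ℤ)) ^ 2 := by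
  classical
  have key : ∀ i : I, 2 * c i ≤ ∑ j, c j := by
    intro i
    have h1 := h (L i)
    have hsplit : ∑ j ∈ Finset.univ.filter (fun j => L j = L i), c j
        + ∑ j ∈ Finset.univ.filter (fun j => ¬ L j = L i), c j = ∑ j, c j :=
      Finset.sum_filter_add_sum_filter_not _ _ _
    simp only [ne_eq] at h1
    have hi : c i ≤ ∑ j ∈ Finset.univ.filter (fun j => L j = L i), c j :=
      Finset.single_le_sum (fun j _ => Nat.zero_le _) (by simp)
    omega
  have part1 : 2 * ∑ i, c i ^ 2 ≤ (∑ i, c i) ^ 2 := by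
    calc 2 * ∑ i, c i ^ 2 = ∑ i, (2 * c i) * c i := by
          rw [Finset.mul_sum]; exact Finset.sum_congr rfl fun i _ => by ring
      _ ≤ ∑ i, (∑ j, c j) * c i :=
          Finset.sum_le_sum fun i _ => Nat.mul_le_mul_right _ (key i)
      _ = (∑ i, c i) ^ 2 := by rw [← Finset.mul_sum]; ring
  refine ⟨part1, ?_⟩
  have hid := aux_sq_sum (fun i => (c i : ℤ)) (Finset.univ : Finset I)
  have hcast : 2 * ∑ i, (c i : ℤ) ^ 2 ≤ (∑ i, (c i : ℤ)) ^ 2 := by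
    exact_mod_cast part1
  linarith
end

section
/- Let n ≥ 1, let R be a finite set with |R| = n+1, let S_0 ⊆ R, and let m : R → ℤ. For S ⊆ R write m_S := Σ_{ρ∈S} m_ρ. Then for every natural number p with p ≤ n − |S_0|: Σ_{S : S_0 ⊆ S ⊆ R, S ≠ R} (−1)^{n − |S|} (m_S)^p = (m_R)^p. -/
open Finset

lemma aux9 {R : Type} [DecidableEq R] (m : R → ℤ) :
    ∀ (U : Finset R) (p : ℕ), p < U.card → ∀ c : ℤ,
      ∑ T ∈ U.powerset, (-1 : ℤ) ^ T.card * (c + ∑ ρ ∈ T, m ρ) ^ p = 0 := by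
  intro U
  induction U using Finset.induction_on with
  | empty => intro p hp; simp at hp
  | insert x s hx ih =>
    intro p hp c
    have hple : p ≤ s.card := Nat.lt_succ_iff.mp (by rwa [Finset.card_insert_of_notMem hx] at hp)
    have key : ∀ k, k < p → ∑ T ∈ s.powerset, (-1:ℤ)^T.card * (c + ∑ ρ ∈ T, m ρ)^k = 0 :=
      fun k hk => ih k (lt_of_lt_of_le hk hple) c
    rw [Finset.sum_powerset_insert hx]
    have h2 : ∑ T ∈ s.powerset, (-1:ℤ)^(insert x T).card * (c + ∑ ρ ∈ insert x T, m ρ)^p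
        = - ∑ T ∈ s.powerset, (-1:ℤ)^T.card * (c + ∑ ρ ∈ T, m ρ)^p := by
      have step : ∀ T ∈ s.powerset,
          (-1:ℤ)^(insert x T).card * (c + ∑ ρ ∈ insert x T, m ρ)^p
          = ∑ k ∈ Finset.range (p+1),
              -((m x)^(p-k) * (p.choose k : ℤ) * ((-1:ℤ)^T.card * (c + ∑ ρ ∈ T, m ρ)^k)) := by
        intro T hT
        have hxT : x ∉ T := fun hxT => hx (Finset.mem_powerset.mp hT hxT)
        rw [Finset.card_insert_of_notMem hxT, Finset.sum_insert hxT]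
        have : c + (m x + ∑ ρ ∈ T, m ρ) = (c + ∑ ρ ∈ T, m ρ) + m x := by ring
        rw [this, add_pow, pow_succ, Finset.mul_sum]
        apply Finset.sum_congr rfl
        intro k _
        ring
      rw [Finset.sum_congr rfl step, Finset.sum_comm]
      rw [Finset.sum_range_succ]
      have hz : ∀ k ∈ Finset.range p,
          ∑ T ∈ s.powerset, -((m x)^(p-k) * (p.choose k : ℤ) * ((-1:ℤ)^T.card * (c + ∑ ρ ∈ T, m ρ)^k)) = 0 := by
        intro k hk
        rw [Finset.sum_neg_distrib, ← Finset.mul_sum, key k (Finset.mem_range.mp hk)]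
        simp
      rw [Finset.sum_congr rfl hz]
      simp [Finset.sum_neg_distrib]
    rw [h2]
    ring


/-- Lemma 5.5, combinatorial form: for `|R| = n + 1`, `S₀ ⊆ R`, `m : R → ℤ`
and `p ≤ n - |S₀|`, the alternating sum of `(m_S)^p` over the proper subsets `S₀ ⊆ S ⊊ R`,
with sign `(-1)^{n - |S|}`, equals `(m_R)^p`. -/
theorem stmt9 (n : ℕ) (hn : 1 ≤ n) (R : Type) [Fintype R] [DecidableEq R]
    (hR : Fintype.card R = n + 1) (S₀ : Finset R) (m : R → ℤ) (p : ℕ)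
    (hp : (p : ℤ) ≤ (n : ℤ) - (S₀.card : ℤ)) :
    ∑ S ∈ Finset.univ.powerset.filter (fun S => S₀ ⊆ S ∧ S ≠ Finset.univ),
        (-1 : ℤ) ^ (n - S.card) * (∑ ρ ∈ S, m ρ) ^ p
      = (∑ ρ, m ρ) ^ p := by
  classical
  set U : Finset R := Finset.univ \ S₀ with hU
  set c : ℤ := ∑ ρ ∈ S₀, m ρ with hc
  have hS0 : S₀.card ≤ n + 1 := by
    rw [← hR, ← Finset.card_univ]; exact Finset.card_le_card (Finset.subset_univ _)
  have hUcard : U.card = n + 1 - S₀.card := by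
    rw [hU, Finset.card_sdiff_of_subset (Finset.subset_univ S₀), Finset.card_univ, hR]
  have hpn : p + S₀.card ≤ n := by
    have : (p:ℤ) + (S₀.card:ℤ) ≤ (n:ℤ) := by linarith
    exact_mod_cast this
  have hpU : p < U.card := by omega
  have reindex : ∑ S ∈ Finset.univ.powerset.filter (fun S => S₀ ⊆ S),
      (-1:ℤ)^S.card * (∑ ρ ∈ S, m ρ)^p
      = ∑ T ∈ U.powerset, (-1:ℤ)^(S₀.card + T.card) * (c + ∑ ρ ∈ T, m ρ)^p := by
    apply Finset.sum_nbij' (fun S => S \ S₀) (fun T => S₀ ∪ T)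
    · intro S hS
      rw [Finset.mem_filter] at hS
      rw [Finset.mem_powerset]
      exact Finset.sdiff_subset_sdiff (Finset.subset_univ S) (le_refl S₀)
    · intro T hT
      rw [Finset.mem_powerset] at hT
      rw [Finset.mem_filter]
      exact ⟨Finset.mem_powerset.mpr (Finset.subset_univ _), Finset.subset_union_left⟩
    · intro S hS
      rw [Finset.mem_filter] at hS
      exact Finset.union_sdiff_of_subset hS.2
    · intro T hT
      rw [Finset.mem_powerset] at hT
      have : Disjoint S₀ T := Finset.disjoint_of_subset_right hT Finset.disjoint_sdiff
      rw [Finset.union_sdiff_cancel_left this]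
    · intro S hS
      rw [Finset.mem_filter] at hS
      have hd : Disjoint S₀ (S \ S₀) := Finset.disjoint_sdiff
      have hcard : S.card = S₀.card + (S \ S₀).card := by
        rw [← Finset.card_union_of_disjoint hd, Finset.union_sdiff_of_subset hS.2]
      have hsum : ∑ ρ ∈ S, m ρ = c + ∑ ρ ∈ S \ S₀, m ρ := by
        rw [hc, ← Finset.sum_union hd, Finset.union_sdiff_of_subset hS.2]
      rw [hcard, hsum]
  have hfull : ∑ S ∈ Finset.univ.powerset.filter (fun S => S₀ ⊆ S),
      (-1:ℤ)^S.card * (∑ ρ ∈ S, m ρ)^p = 0 := by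
    rw [reindex]
    have : ∀ T ∈ U.powerset, (-1:ℤ)^(S₀.card + T.card) * (c + ∑ ρ ∈ T, m ρ)^p
        = (-1:ℤ)^S₀.card * ((-1:ℤ)^T.card * (c + ∑ ρ ∈ T, m ρ)^p) := by
      intro T _; rw [pow_add]; ring
    rw [Finset.sum_congr rfl this, ← Finset.mul_sum, aux9 m U p hpU c, mul_zero]
  -- split off the full set
  have hsplit : Finset.univ.powerset.filter (fun S => S₀ ⊆ S)
      = insert Finset.univ (Finset.univ.powerset.filter (fun S => S₀ ⊆ S ∧ S ≠ Finset.univ)) := by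
    ext S
    simp only [Finset.mem_insert, Finset.mem_filter, Finset.mem_powerset]
    constructor
    · intro ⟨h1, h2⟩
      by_cases hS : S = Finset.univ
      · exact Or.inl hS
      · exact Or.inr ⟨h1, h2, hS⟩
    · rintro (rfl | ⟨h1, h2, h3⟩)
      · exact ⟨le_refl _, Finset.subset_univ _⟩
      · exact ⟨h1, h2⟩
  have hnotmem : Finset.univ ∉ Finset.univ.powerset.filter (fun S => S₀ ⊆ S ∧ S ≠ Finset.univ) := by
    simp
  rw [hsplit, Finset.sum_insert hnotmem] at hfull
  have hcu : (Finset.univ : Finset R).card = n + 1 := by rw [Finset.card_univ, hR]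
  have hA : ∑ S ∈ Finset.univ.powerset.filter (fun S => S₀ ⊆ S ∧ S ≠ Finset.univ),
      (-1:ℤ)^S.card * (∑ ρ ∈ S, m ρ)^p = (-1:ℤ)^n * (∑ ρ, m ρ)^p := by
    have : (-1:ℤ)^(Finset.univ : Finset R).card = -(-1:ℤ)^n := by
      rw [hcu, pow_succ]; ring
    rw [this] at hfull
    linarith
  have hsgn : ∀ S ∈ Finset.univ.powerset.filter (fun S => S₀ ⊆ S ∧ S ≠ Finset.univ),
      (-1:ℤ)^(n - S.card) * (∑ ρ ∈ S, m ρ)^p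
      = (-1:ℤ)^n * ((-1:ℤ)^S.card * (∑ ρ ∈ S, m ρ)^p) := by
    intro S hS
    rw [Finset.mem_filter] at hS
    have hlt : S.card < n + 1 := by
      rw [← hcu]
      exact Finset.card_lt_card (lt_of_le_of_ne (Finset.subset_univ S) hS.2.2)
    have hcle : S.card ≤ n := Nat.lt_succ_iff.mp hlt
    have h1 : ((-1:ℤ)^S.card) * ((-1:ℤ)^S.card) = 1 := by
      rw [← pow_add, ← two_mul, pow_mul]; norm_num
    have h2 : (-1:ℤ)^(n - S.card) = (-1:ℤ)^n * (-1:ℤ)^S.card := by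
      calc (-1:ℤ)^(n - S.card) = (-1:ℤ)^(n - S.card) * (((-1:ℤ)^S.card) * ((-1:ℤ)^S.card)) := by
            rw [h1, mul_one]
        _ = ((-1:ℤ)^(n - S.card) * (-1:ℤ)^S.card) * (-1:ℤ)^S.card := by ring
        _ = (-1:ℤ)^n * (-1:ℤ)^S.card := by rw [← pow_add, Nat.sub_add_cancel hcle]
    rw [h2]; ring
  rw [Finset.sum_congr rfl hsgn, ← Finset.mul_sum, hA, ← mul_assoc, ← pow_add, ← two_mul,
    pow_mul]
  norm_num
end

section
/- Fix n ≥ 1 and work in the quotient ring ℚ[X]/⟨X^{n+1}⟩, where for an element P with constant coefficient 1 one defines log(P) := Σ_{i=1}^{n} (−1)^{i+1} (P−1)^i / i. For natural numbers l, k define A_{l,k} := Σ_{i=0}^{k} C(k,i)(−1)^i i^l (convention 0^0 = 1). Then for every integer m and every k_0 with 1 ≤ k_0 ≤ n: Σ_{i=0}^{k_0} (−1)^i C(k_0,i) · log(1 − (m+i)X) = − Σ_{k=k_0}^{n} ( Σ_{l=k_0}^{k} C(k,l) · A_{l,k_0} · m^{k−l} ) · X^k / k in ℚ[X]/⟨X^{n+1}⟩.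 -/
open Finset Polynomial

/-- The truncated polynomial ring `ℚ[X]/⟨X^{n+1}⟩`. -/
abbrev QPoly (n : ℕ) : Type :=
  Polynomial ℚ ⧸ Ideal.span {(Polynomial.X : Polynomial ℚ) ^ (n + 1)}

/-- The quotient map `ℚ[X] → ℚ[X]/⟨X^{n+1}⟩`. -/
noncomputable def qmk (n : ℕ) : Polynomial ℚ →+* QPoly n := Ideal.Quotient.mk _

/-- The formal logarithm on `ℚ[X]/⟨X^{n+1}⟩`:
`log P := Σ_{i=1}^{n} (-1)^{i+1} (P - 1)^i / i`. -/
noncomputable def qlog (n : ℕ) (P : QPoly n) : QPoly n :=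
  ∑ i ∈ Finset.Icc 1 n, ((-1 : ℚ) ^ (i + 1) / (i : ℚ)) • (P - 1) ^ i

/-- `A_{l,k} := Σ_{i=0}^{k} C(k,i) (-1)^i i^l`, with the convention `0^0 = 1`. -/
def Apk (l k : ℕ) : ℤ :=
  ∑ i ∈ Finset.range (k + 1), (k.choose i : ℤ) * (-1) ^ i * (i : ℤ) ^ l

theorem Apk_eq_zero : ∀ l k : ℕ, l < k → Apk l k = 0 := by
  intro l
  induction l using Nat.strong_induction_on with
  | _ l IH =>
    intro k hlk
    match l, k with
    | 0, k =>
      have hk : k ≠ 0 := by omega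
      have := Int.alternating_sum_range_choose_of_ne hk
      rw [Apk, ← this]
      refine Finset.sum_congr rfl fun i _ => by ring
    | l + 1, k + 1 =>
      rw [Apk, Finset.sum_range_succ']
      simp only [Nat.cast_zero, zero_pow (Nat.succ_ne_zero l), mul_zero, add_zero]
      have hterm : ∀ j ∈ Finset.range (k + 1),
          ((k+1).choose (j+1) : ℤ) * (-1) ^ (j+1) * ((j:ℤ)+1) ^ (l+1)
          = -((k:ℤ)+1) * ((k.choose j : ℤ) * (-1)^j * ((j:ℤ)+1)^l) := by
        intro j _
        have h := Nat.add_one_mul_choose_eq k j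
        have h' : ((k:ℤ)+1) * (k.choose j : ℤ) = ((k+1).choose (j+1) : ℤ) * ((j:ℤ)+1) := by
          exact_mod_cast congrArg (Nat.cast : ℕ → ℤ) h
        linear_combination ((-1:ℤ)^j * ((j:ℤ)+1)^l) * h'
      calc ∑ j ∈ Finset.range (k+1), ((k+1).choose (j+1) : ℤ) * (-1) ^ (j+1) * ((j:ℕ)+1 : ℤ) ^ (l+1)
          = ∑ j ∈ Finset.range (k+1), -((k:ℤ)+1) * ((k.choose j : ℤ) * (-1)^j * ((j:ℤ)+1)^l) := by
            refine Finset.sum_congr rfl fun j hj => by push_cast; exact hterm j hj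
        _ = -((k:ℤ)+1) * ∑ j ∈ Finset.range (k+1), (k.choose j : ℤ) * (-1)^j * ((j:ℤ)+1)^l := by
            rw [Finset.mul_sum]
        _ = 0 := by
            have hinner : ∑ j ∈ Finset.range (k+1), (k.choose j : ℤ) * (-1)^j * ((j:ℤ)+1)^l
                = ∑ t ∈ Finset.range (l+1), (l.choose t : ℤ) * Apk t k := by
              have expand : ∀ j : ℕ, ((j:ℤ)+1)^l = ∑ t ∈ Finset.range (l+1), (j:ℤ)^t * (l.choose t : ℤ) := by
                intro j
                have := add_pow ((j:ℤ)) 1 l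
                simpa using this
              calc ∑ j ∈ Finset.range (k+1), (k.choose j : ℤ) * (-1)^j * ((j:ℤ)+1)^l
                  = ∑ j ∈ Finset.range (k+1), ∑ t ∈ Finset.range (l+1),
                      (l.choose t : ℤ) * ((k.choose j : ℤ) * (-1)^j * (j:ℤ)^t) := by
                    refine Finset.sum_congr rfl fun j _ => ?_
                    rw [expand j, Finset.mul_sum]
                    refine Finset.sum_congr rfl fun t _ => by ring
                _ = ∑ t ∈ Finset.range (l+1), (l.choose t : ℤ) * Apk t k := by
                    rw [Finset.sum_comm]
                    refine Finset.sum_congr rfl fun t _ => ?_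
                    rw [Apk, Finset.mul_sum]
            rw [hinner]
            have : ∀ t ∈ Finset.range (l+1), (l.choose t : ℤ) * Apk t k = 0 := by
              intro t ht
              have ht' : t < l + 1 := Finset.mem_range.mp ht
              rw [IH t (by omega) k (by omega), mul_zero]
            rw [Finset.sum_eq_zero this, mul_zero]

lemma Apk_cast (l k : ℕ) :
    ((Apk l k : ℤ) : ℚ) = ∑ i ∈ Finset.range (k + 1), (k.choose i : ℚ) * (-1) ^ i * (i : ℚ) ^ l := by
  rw [Apk]; push_cast
  exact Finset.sum_congr rfl fun i _ => by ring

lemma sum_shift (k₀ k : ℕ) (m : ℤ) :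
    ∑ i ∈ Finset.range (k₀ + 1), (-1 : ℚ) ^ i * (k₀.choose i : ℚ) * ((m : ℚ) + (i : ℚ)) ^ k
      = ∑ l ∈ Finset.Icc k₀ k, (k.choose l : ℚ) * ((Apk l k₀ : ℤ) : ℚ) * (m : ℚ) ^ (k - l) := by
  have expand : ∀ i : ℕ, ((m : ℚ) + (i : ℚ)) ^ k
      = ∑ l ∈ Finset.range (k + 1), (i : ℚ) ^ l * (m : ℚ) ^ (k - l) * (k.choose l : ℚ) :=
    fun i => by rw [add_comm]; exact add_pow (i:ℚ) (m:ℚ) k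
  calc ∑ i ∈ Finset.range (k₀ + 1), (-1 : ℚ) ^ i * (k₀.choose i : ℚ) * ((m : ℚ) + (i : ℚ)) ^ k
      = ∑ i ∈ Finset.range (k₀ + 1), ∑ l ∈ Finset.range (k + 1),
          (k.choose l : ℚ) * ((k₀.choose i : ℚ) * (-1) ^ i * (i : ℚ) ^ l) * (m : ℚ) ^ (k - l) := by
        refine Finset.sum_congr rfl fun i _ => ?_
        rw [expand i, Finset.mul_sum]
        exact Finset.sum_congr rfl fun l _ => by ring
    _ = ∑ l ∈ Finset.range (k + 1), (k.choose l : ℚ) * ((Apk l k₀ : ℤ) : ℚ) * (m : ℚ) ^ (k - l) := by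
        rw [Finset.sum_comm]
        refine Finset.sum_congr rfl fun l _ => ?_
        rw [Apk_cast, Finset.mul_sum, Finset.sum_mul]
    _ = ∑ l ∈ Finset.Icc k₀ k, (k.choose l : ℚ) * ((Apk l k₀ : ℤ) : ℚ) * (m : ℚ) ^ (k - l) := by
        refine (Finset.sum_subset (fun x hx => Finset.mem_range.mpr (by
          simp only [Finset.mem_Icc] at hx; omega)) fun x hx hx' => ?_).symm
        simp only [Finset.mem_range, Finset.mem_Icc] at hx hx'
        rw [Apk_eq_zero x k₀ (by omega), Int.cast_zero, mul_zero, zero_mul]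

lemma qmk_smul (n : ℕ) (r : ℚ) (p : Polynomial ℚ) : qmk n (r • p) = r • qmk n p :=
  map_smul (Ideal.Quotient.mkₐ ℚ _) r p

lemma qlog_one_sub (n : ℕ) (a : ℚ) :
    qlog n (qmk n (1 - Polynomial.C a * Polynomial.X))
      = ∑ k ∈ Finset.Icc 1 n, (-(a ^ k) / (k : ℚ)) • (qmk n Polynomial.X) ^ k := by
  have h1 : qmk n (1 - Polynomial.C a * Polynomial.X) - 1 = (-a) • qmk n Polynomial.X := by
    have e1 : qmk n ((1 - Polynomial.C a * Polynomial.X) - 1)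
        = qmk n (1 - Polynomial.C a * Polynomial.X) - 1 := by rw [map_sub, map_one]
    have e2 : (1 - Polynomial.C a * Polynomial.X) - 1 = (-a) • (Polynomial.X : Polynomial ℚ) := by
      rw [Polynomial.smul_eq_C_mul, map_neg]; ring
    rw [← e1, e2, qmk_smul]
  rw [qlog, h1]
  refine Finset.sum_congr rfl fun i hi => ?_
  rw [_root_.smul_pow, smul_smul]
  congr 1
  have h2 : ((-1:ℚ))^(i+1) * ((-1:ℚ)^i * a^i) = -(a^i) := by
    rw [← mul_assoc, ← pow_add]
    have : i + 1 + i = 2 * i + 1 := by ring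
    rw [this, pow_succ, pow_mul]
    norm_num
  rw [neg_pow a i, div_mul_eq_mul_div, h2]

/-- algebraic core of Proposition 5.8: in `ℚ[X]/⟨X^{n+1}⟩`, for every
`m ∈ ℤ` and `1 ≤ k₀ ≤ n`,
`Σ_{i=0}^{k₀} (-1)^i C(k₀,i) log(1 - (m+i)X)
  = - Σ_{k=k₀}^{n} (Σ_{l=k₀}^{k} C(k,l) A_{l,k₀} m^{k-l}) X^k / k`. -/
theorem stmt15 (n : ℕ) (hn : 1 ≤ n) (m : ℤ) (k₀ : ℕ) (hk₀ : 1 ≤ k₀) (hk₀n : k₀ ≤ n) :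
    ∑ i ∈ Finset.range (k₀ + 1), ((-1 : ℚ) ^ i * (k₀.choose i : ℚ)) •
        qlog n (qmk n (1 - Polynomial.C ((m : ℚ) + (i : ℚ)) * Polynomial.X))
      = - ∑ k ∈ Finset.Icc k₀ n,
          ((∑ l ∈ Finset.Icc k₀ k, (k.choose l : ℚ) * ((Apk l k₀ : ℤ) : ℚ) * (m : ℚ) ^ (k - l))
              / (k : ℚ)) • (qmk n Polynomial.X) ^ k := by
  set Xq := qmk n Polynomial.X with hXq
  set S : ℕ → ℚ := fun k =>
    ∑ l ∈ Finset.Icc k₀ k, (k.choose l : ℚ) * ((Apk l k₀ : ℤ) : ℚ) * (m : ℚ) ^ (k - l) with hS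
  have lhs_eq : ∑ i ∈ Finset.range (k₀ + 1), ((-1 : ℚ) ^ i * (k₀.choose i : ℚ)) •
        qlog n (qmk n (1 - Polynomial.C ((m : ℚ) + (i : ℚ)) * Polynomial.X))
      = ∑ k ∈ Finset.Icc 1 n, (-(S k / (k : ℚ))) • Xq ^ k := by
    calc ∑ i ∈ Finset.range (k₀ + 1), ((-1 : ℚ) ^ i * (k₀.choose i : ℚ)) •
          qlog n (qmk n (1 - Polynomial.C ((m : ℚ) + (i : ℚ)) * Polynomial.X))
        = ∑ i ∈ Finset.range (k₀ + 1), ∑ k ∈ Finset.Icc 1 n,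
            (((-1 : ℚ) ^ i * (k₀.choose i : ℚ)) * (-(((m : ℚ) + (i : ℚ)) ^ k) / (k : ℚ))) • Xq ^ k := by
          refine Finset.sum_congr rfl fun i _ => ?_
          rw [qlog_one_sub, Finset.smul_sum]
          exact Finset.sum_congr rfl fun k _ => by rw [smul_smul]
      _ = ∑ k ∈ Finset.Icc 1 n, (∑ i ∈ Finset.range (k₀ + 1),
            ((-1 : ℚ) ^ i * (k₀.choose i : ℚ)) * (-(((m : ℚ) + (i : ℚ)) ^ k) / (k : ℚ))) • Xq ^ k := by
          rw [Finset.sum_comm]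
          exact Finset.sum_congr rfl fun k _ => (Finset.sum_smul).symm
      _ = ∑ k ∈ Finset.Icc 1 n, (-(S k / (k : ℚ))) • Xq ^ k := by
          refine Finset.sum_congr rfl fun k _ => ?_
          congr 1
          calc ∑ i ∈ Finset.range (k₀ + 1),
                ((-1 : ℚ) ^ i * (k₀.choose i : ℚ)) * (-(((m : ℚ) + (i : ℚ)) ^ k) / (k : ℚ))
              = ∑ i ∈ Finset.range (k₀ + 1),
                -(((-1 : ℚ) ^ i * (k₀.choose i : ℚ) * ((m : ℚ) + (i : ℚ)) ^ k) / (k : ℚ)) := by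
                exact Finset.sum_congr rfl fun i _ => by ring
            _ = -((∑ i ∈ Finset.range (k₀ + 1),
                (-1 : ℚ) ^ i * (k₀.choose i : ℚ) * ((m : ℚ) + (i : ℚ)) ^ k) / (k : ℚ)) := by
                rw [Finset.sum_neg_distrib, ← Finset.sum_div]
            _ = -(S k / (k : ℚ)) := by rw [sum_shift k₀ k m]
  rw [lhs_eq]
  have rhs_eq : - ∑ k ∈ Finset.Icc k₀ n, (S k / (k : ℚ)) • Xq ^ k
      = ∑ k ∈ Finset.Icc k₀ n, (-(S k / (k : ℚ))) • Xq ^ k := by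
    rw [← Finset.sum_neg_distrib]
    exact Finset.sum_congr rfl fun k _ => (neg_smul _ _).symm
  rw [rhs_eq]
  refine (Finset.sum_subset (fun x hx => ?_) fun x hx hx' => ?_).symm
  · simp only [Finset.mem_Icc] at hx ⊢; omega
  · simp only [Finset.mem_Icc] at hx hx'
    have hxk : x < k₀ := by omega
    have : S x = 0 := by
      rw [hS]
      simp only
      rw [Finset.Icc_eq_empty (by omega), Finset.sum_empty]
    rw [this, zero_div, neg_zero, zero_smul]
end
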